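/- arXiv:math/0403167 — 5 statements merged into one kernel-verified Lean document; each statement's English description precedes it below -/
import Mathlib

section
/- For |q|<1, the series identity ∑_{n≥0} q^{n²+n} (-q;q²)_n / (q²;q²)_n = (-q²;q⁴)_∞ (-q³;q⁴)_∞ (-q⁴;q⁴)_∞ holds. -/
open scoped BigOperators
open Finset Filter Complex Topology

/-- Finite q-Pochhammer symbol `(a;q)_n`. -/
noncomputable def qPoch (a q : ℂ) (n : ℕ) : ℂ := ∏ j ∈ Finset.range n, (1 - a * q ^ j)

/-- Infinite q-Pochhammer symbol `(a;q)_∞`. -/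
noncomputable def qPochInf (a q : ℂ) : ℂ := ∏' j : ℕ, (1 - a * q ^ j)

/-- triangular-type exponent `k(k-1)/2`. -/
def tri (k : ℕ) : ℕ := k * (k - 1) / 2

lemma tri_zero : tri 0 = 0 := rfl
lemma tri_one : tri 1 = 0 := rfl

lemma tri_succ (k : ℕ) : tri (k + 1) = tri k + k := by
  unfold tri
  simp only [Nat.add_sub_cancel]
  have h : (k + 1) * k = k * (k - 1) + k * 2 := by
    cases k with
    | zero => rfl
    | succ j => simp [Nat.succ_sub_one]; ring
  rw [h, Nat.add_mul_div_right _ _ (by norm_num : 0 < 2)]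

lemma two_tri (k : ℕ) : 2 * tri k = k * (k - 1) := by
  unfold tri
  refine Nat.mul_div_cancel' ?_
  rcases Nat.even_or_odd k with h | h
  · exact Dvd.dvd.mul_right (even_iff_two_dvd.mp h) _
  · have h2 : Even (k - 1) := by
      rcases h with ⟨m, rfl⟩
      simpa using ⟨m, by omega⟩
    exact Dvd.dvd.mul_left (even_iff_two_dvd.mp h2) _

lemma tri_sq (k : ℕ) : tri k + tri (k + 1) = k * k := by
  have h := two_tri k
  rw [tri_succ]
  cases k with
  | zero => rfl
  | succ j =>
    simp [Nat.succ_sub_one] at h ⊢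
    have h3 : (j+1)*(j+1) = (j+1)*j + (j+1) := by ring
    omega

lemma tri_add (k m : ℕ) : tri (k + m + 1) = tri (k + 1) + tri (m + 1) + k * m := by
  induction m with
  | zero => simp [tri_one]
  | succ m ih =>
    have h1 : k + (m + 1) + 1 = (k + m + 1) + 1 := by ring
    rw [h1, tri_succ, ih, tri_succ (m+1)]
    ring

lemma tri_ge (n : ℕ) : n ≤ tri (n + 1) := by
  unfold tri
  simp only [Nat.add_sub_cancel]
  rcases Nat.eq_zero_or_pos n with h | h
  · simp [h]
  · rw [Nat.le_div_iff_mul_le (by norm_num)]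
    nlinarith

lemma qPoch_zero (a q : ℂ) : qPoch a q 0 = 1 := by simp [qPoch]

lemma qPoch_succ (a q : ℂ) (n : ℕ) : qPoch a q (n + 1) = qPoch a q n * (1 - a * q ^ n) :=
  Finset.prod_range_succ _ _

lemma qPoch_ne_zero {a q : ℂ} (h : ∀ j, ‖a * q ^ j‖ < 1) (n : ℕ) : qPoch a q n ≠ 0 := by
  refine Finset.prod_ne_zero_iff.mpr fun j _ => ?_
  intro hz
  have h1 : (1 : ℂ) = a * q ^ j := by linear_combination hz
  have h2 := h j
  rw [← h1] at h2
  simp at h2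

section S2

lemma exp_neg_two_le (x : ℝ) (h0 : 0 ≤ x) (h1 : x ≤ 1/2) : Real.exp (-(2*x)) ≤ 1 - x := by
  have h2 : (2*x) + 1 ≤ Real.exp (2*x) := Real.add_one_le_exp _
  have h3 : 0 < Real.exp (2*x) := Real.exp_pos _
  rw [Real.exp_neg]
  rw [inv_le_iff_one_le_mul₀ h3]
  nlinarith

lemma prod_one_sub_lower (r : ℝ) (h0 : 0 ≤ r) (h1 : r < 1) :
    ∃ c > 0, ∀ n, c ≤ ∏ j ∈ range n, (1 - r^(j+1)) := by
  obtain ⟨N, hN⟩ := exists_pow_lt_of_lt_one (by norm_num : (0:ℝ) < 1/2) h1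
  have hfac : ∀ j : ℕ, 0 < 1 - r^(j+1) := fun j =>
    sub_pos.mpr (pow_lt_one₀ h0 h1 (Nat.succ_ne_zero j))
  have hhalf : ∀ j, N ≤ j → r^(j+1) ≤ 1/2 := fun j hj =>
    le_trans (pow_le_pow_of_le_one h0 h1.le (by omega)) hN.le
  set c1 : ℝ := ∏ j ∈ range N, (1 - r^(j+1)) with hc1
  have hc1pos : 0 < c1 := Finset.prod_pos fun j _ => hfac j
  set K : ℝ := Real.exp (-(2 * (r / (1-r)))) with hK
  have hKpos : 0 < K := Real.exp_pos _
  have hK1 : K ≤ 1 := by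
    rw [hK, Real.exp_le_one_iff]
    have : 0 ≤ r / (1-r) := div_nonneg h0 (by linarith)
    linarith
  refine ⟨c1 * K, mul_pos hc1pos hKpos, fun n => ?_⟩
  have hsumbound : ∀ m n : ℕ, ∑ j ∈ Finset.Ico m n, 2 * r^(j+1) ≤ 2 * (r / (1-r)) := by
    intro m n
    have h4 : ∑ j ∈ Finset.Ico m n, r^(j+1) ≤ ∑ j ∈ range n, r^(j+1) := by
      apply Finset.sum_le_sum_of_subset_of_nonneg
      · intro x hx; simp at hx ⊢; omega
      · intro i _ _; positivity
    have h5 : ∑ j ∈ range n, r^(j+1) = r * ∑ j ∈ range n, r^j := by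
      rw [Finset.mul_sum]; congr 1; ext j; rw [pow_succ]; ring
    have h6 : ∑ j ∈ range n, r^j ≤ (1-r)⁻¹ := by
      have := Summable.sum_le_tsum (range n) (fun i _ => by positivity)
        (summable_geometric_of_lt_one h0 h1)
      rwa [tsum_geometric_of_lt_one h0 h1] at this
    rw [← Finset.mul_sum]
    have : r * ∑ j ∈ range n, r ^ j ≤ r * (1-r)⁻¹ := by
      apply mul_le_mul_of_nonneg_left h6 h0
    rw [div_eq_mul_inv]
    nlinarith [h4, h5]
  rcases le_or_gt n N with hn | hn
  · -- c1 ≤ prod n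
    have hsub : ∏ j ∈ range N, (1 - r^(j+1)) ≤ ∏ j ∈ range n, (1 - r^(j+1)) := by
      rw [← Finset.prod_range_mul_prod_Ico _ hn]
      have hIle : ∏ j ∈ Finset.Ico n N, (1 - r^(j+1)) ≤ 1 :=
        Finset.prod_le_one (fun j _ => (hfac j).le) (fun j _ => by nlinarith [pow_nonneg h0 (j+1)])
      nlinarith [Finset.prod_pos (fun j (_ : j ∈ range n) => hfac j)]
    calc c1 * K ≤ c1 * 1 := by nlinarith
    _ = c1 := mul_one _
    _ ≤ _ := hsub
  · -- N < n
    rw [← Finset.prod_range_mul_prod_Ico _ hn.le]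
    have hexp : K ≤ ∏ j ∈ Finset.Ico N n, (1 - r^(j+1)) := by
      have hstep : ∏ j ∈ Finset.Ico N n, Real.exp (-(2*r^(j+1))) ≤
          ∏ j ∈ Finset.Ico N n, (1 - r^(j+1)) := by
        apply Finset.prod_le_prod (fun j _ => (Real.exp_pos _).le)
        intro j hj
        exact exp_neg_two_le _ (by positivity) (hhalf j (Finset.mem_Ico.mp hj).1)
      have heq : ∏ j ∈ Finset.Ico N n, Real.exp (-(2*r^(j+1))) =
          Real.exp (-(∑ j ∈ Finset.Ico N n, 2*r^(j+1))) := by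
        rw [← Real.exp_sum]
        congr 1
        rw [Finset.sum_neg_distrib]
      have hmono : K ≤ Real.exp (-(∑ j ∈ Finset.Ico N n, 2*r^(j+1))) := by
        rw [hK, Real.exp_le_exp]
        have := hsumbound N n
        linarith
      calc K ≤ _ := hmono
      _ = _ := heq.symm
      _ ≤ _ := hstep
    calc c1 * K ≤ c1 * ∏ j ∈ Finset.Ico N n, (1 - r^(j+1)) :=
      mul_le_mul_of_nonneg_left hexp hc1pos.le
    _ = _ := rfl

end S2

lemma qPoch_norm_lower {p : ℂ} (hp : ‖p‖ < 1) :
    ∃ c > 0, ∀ n, c ≤ ‖qPoch p p n‖ := by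
  obtain ⟨c, hc, hcle⟩ := prod_one_sub_lower ‖p‖ (norm_nonneg p) hp
  refine ⟨c, hc, fun n => ?_⟩
  refine le_trans (hcle n) ?_
  rw [qPoch, norm_prod]
  apply Finset.prod_le_prod
  · intro j _
    have : ‖p‖^(j+1) < 1 := pow_lt_one₀ (norm_nonneg p) hp (Nat.succ_ne_zero j)
    linarith
  · intro j _
    have h1 : ‖p * p^j‖ = ‖p‖^(j+1) := by
      rw [norm_mul, norm_pow, pow_succ]; ring
    calc 1 - ‖p‖^(j+1) = ‖(1:ℂ)‖ - ‖p * p^j‖ := by rw [h1, norm_one]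
    _ ≤ ‖1 - p * p^j‖ := norm_sub_norm_le _ _

lemma multipliable_one_add (g : ℕ → ℂ) (hg : Summable g) (h0 : ∀ j, 1 + g j ≠ 0) :
    Multipliable fun j => 1 + g j := by
  exact Complex.multipliable_one_add_of_summable hg

/-- the factors we care about are nonzero -/
lemma one_add_ne_zero' {w : ℂ} (hw : ‖w‖ < 1) : 1 + w ≠ 0 := by
  intro h
  have : w = -1 := by linear_combination h
  rw [this] at hw; simp at hw

section Euler

variable {p : ℂ}

/-- summand of Euler's second identity -/
noncomputable def eterm (p z : ℂ) (k : ℕ) : ℂ := p^(tri k) * z^k / qPoch p p k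

lemma norm_p_pow_lt (hp : ‖p‖ < 1) (j : ℕ) : ‖p * p ^ j‖ < 1 := by
  rw [norm_mul, norm_pow]
  calc ‖p‖ * ‖p‖^j ≤ ‖p‖ * 1 := by
        apply mul_le_mul_of_nonneg_left _ (norm_nonneg p)
        exact pow_le_one₀ (norm_nonneg p) hp.le
  _ < 1 := by simpa using hp

lemma qQ_ne (hp : ‖p‖ < 1) (k : ℕ) : qPoch p p k ≠ 0 :=
  qPoch_ne_zero (norm_p_pow_lt hp) k

lemma qfac_ne (hp : ‖p‖ < 1) (k : ℕ) : (1 : ℂ) - p * p ^ k ≠ 0 := by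
  intro h
  have h1 : (1:ℂ) = p * p^k := by linear_combination h
  have := norm_p_pow_lt hp k
  rw [← h1] at this; simp at this

lemma eterm_zero (z : ℂ) : eterm p z 0 = 1 := by
  simp [eterm, qPoch_zero, tri]

lemma eterm_succ (hp : ‖p‖ < 1) (z : ℂ) (k : ℕ) :
    eterm p z (k+1) = eterm p z k * (p^k * z) / (1 - p * p^k) := by
  unfold eterm
  rw [tri_succ, qPoch_succ, pow_add, pow_succ]
  field_simp [qQ_ne hp, qfac_ne hp]

lemma eterm_summable (hp : ‖p‖ < 1) (z : ℂ) : Summable (eterm p z) := by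
  apply summable_of_ratio_norm_eventually_le (r := 1/2) (by norm_num)
  have h1 : Tendsto (fun k : ℕ => ‖p^k * z‖) atTop (𝓝 0) := by
    have := (tendsto_pow_atTop_nhds_zero_of_norm_lt_one hp).mul_const z
    simpa using this.norm
  have h2 : Tendsto (fun k : ℕ => ‖p‖^(k+1)) atTop (𝓝 0) := by
    have := tendsto_pow_atTop_nhds_zero_of_norm_lt_one (x := ‖p‖) (by simpa using hp)
    exact this.comp (tendsto_add_atTop_nat 1)
  filter_upwards [h1.eventually_lt_const (by norm_num : (0:ℝ) < 1/4),
    h2.eventually_lt_const (by norm_num : (0:ℝ) < 1/2)] with k hk1 hk2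
  rw [eterm_succ hp z k]
  have hden : (1:ℝ)/2 ≤ ‖1 - p * p^k‖ := by
    have h3 : ‖p * p^k‖ = ‖p‖^(k+1) := by rw [norm_mul, norm_pow, pow_succ]; ring
    have h4 := norm_sub_norm_le (1 : ℂ) (p * p^k)
    rw [norm_one, h3] at h4
    linarith
  rw [norm_div, norm_mul]
  have hQpos : (0:ℝ) < ‖1 - p * p^k‖ := by linarith
  rw [div_le_iff₀ hQpos]
  have := norm_nonneg (eterm p z k)
  nlinarith

/-- Euler's functional equation -/
lemma euler_FE (hp : ‖p‖ < 1) (z : ℂ) :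
    ∑' k, eterm p z k = (1 + z) * ∑' k, eterm p (p*z) k := by
  have hs1 := eterm_summable hp z
  have hs2 := eterm_summable hp (p*z)
  set d : ℕ → ℂ := fun k => eterm p z k - eterm p (p*z) k with hd
  have hsd : Summable d := hs1.sub hs2
  have hd0 : d 0 = 0 := by simp [hd, eterm_zero]
  have hdsucc : ∀ k, d (k+1) = z * eterm p (p*z) k := by
    intro k
    have e1 := eterm_succ hp z k
    have e2 := eterm_succ hp (p*z) k
    have e3 : eterm p (p*z) k = p^k * eterm p z k := by
      unfold eterm; rw [mul_pow]; ring
    simp only [hd]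
    rw [e1, e2, e3, div_sub_div_same, div_eq_iff (qfac_ne hp k)]
    ring
  have key : ∑' k, d k = z * ∑' k, eterm p (p*z) k := by
    rw [Summable.tsum_eq_zero_add hsd, hd0]
    simp only [hdsucc]
    rw [tsum_mul_left]
    ring
  have hsub : ∑' k, d k = (∑' k, eterm p z k) - ∑' k, eterm p (p*z) k :=
    (Summable.tsum_sub hs1 hs2)
  rw [hsub] at key
  linear_combination key

lemma euler_iter (hp : ‖p‖ < 1) (z : ℂ) (N : ℕ) :
    ∑' k, eterm p z k = (∏ j ∈ range N, (1 + z * p^j)) * ∑' k, eterm p (p^N * z) k := by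
  induction N with
  | zero => simp
  | succ N ih =>
    calc ∑' k, eterm p z k
        = (∏ j ∈ range N, (1 + z * p^j)) * ∑' k, eterm p (p^N * z) k := ih
      _ = (∏ j ∈ range N, (1 + z * p^j)) *
          ((1 + p^N * z) * ∑' k, eterm p (p * (p^N * z)) k) := by
            rw [euler_FE hp (p^N * z)]
      _ = (∏ j ∈ range (N+1), (1 + z * p^j)) * ∑' k, eterm p (p^(N+1) * z) k := by
            rw [prod_range_succ]
            simp only [show p * (p^N * z) = p^(N+1) * z from by ring]
            ring

lemma F_near_one (hp : ‖p‖ < 1) {c : ℝ} (hc : 0 < c) (hcb : ∀ n, c ≤ ‖qPoch p p n‖)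
    (w : ℂ) (hw : ‖w‖ ≤ 1/2) : ‖(∑' k, eterm p w k) - 1‖ ≤ 2/c * ‖w‖ := by
  have hs := eterm_summable hp w
  have hs' : Summable (fun k => eterm p w (k+1)) := (summable_nat_add_iff 1).mpr hs
  have heq : (∑' k, eterm p w k) - 1 = ∑' k, eterm p w (k+1) := by
    rw [Summable.tsum_eq_zero_add hs, eterm_zero]; ring
  have hbound : ∀ k : ℕ, ‖eterm p w (k+1)‖ ≤ 1/c * ‖w‖^(k+1) := by
    intro k
    unfold eterm
    rw [norm_div, norm_mul, norm_pow, norm_pow]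
    have h1 : ‖p‖^(tri (k+1)) ≤ 1 := pow_le_one₀ (norm_nonneg p) hp.le
    have h2 := hcb (k+1)
    have h3 : (0:ℝ) < ‖qPoch p p (k+1)‖ := lt_of_lt_of_le hc h2
    rw [div_le_iff₀ h3]
    have h4 : ‖w‖^(k+1) ≥ 0 := by positivity
    have h5 : 1/c * ‖w‖^(k+1) * ‖qPoch p p (k+1)‖ ≥ 1/c * ‖w‖^(k+1) * c := by
      apply mul_le_mul_of_nonneg_left h2
      positivity
    have h6 : 1/c * ‖w‖^(k+1) * c = ‖w‖^(k+1) := by field_simp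
    nlinarith
  have hw1 : ‖w‖ < 1 := by linarith
  have hmaj : Summable (fun k : ℕ => 1/c * ‖w‖^(k+1)) := by
    have h := (summable_geometric_of_lt_one (norm_nonneg w) hw1).mul_left (1/c * ‖w‖)
    apply h.congr
    intro k; rw [pow_succ]; ring
  calc ‖(∑' k, eterm p w k) - 1‖ = ‖∑' k, eterm p w (k+1)‖ := by rw [heq]
  _ ≤ ∑' k, ‖eterm p w (k+1)‖ := norm_tsum_le_tsum_norm hs'.norm
  _ ≤ ∑' k, 1/c * ‖w‖^(k+1) := Summable.tsum_le_tsum hbound hs'.norm hmaj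
  _ = 1/c * ‖w‖ * (1 - ‖w‖)⁻¹ := by
      have : ∀ k : ℕ, 1/c * ‖w‖^(k+1) = (1/c * ‖w‖) * ‖w‖^k := by
        intro k; rw [pow_succ]; ring
      simp only [this]
      rw [tsum_mul_left, tsum_geometric_of_lt_one (norm_nonneg w) hw1]
  _ ≤ 2/c * ‖w‖ := by
      have h7 : (1 - ‖w‖)⁻¹ ≤ 2 := by
        rw [inv_le_comm₀ (by linarith) (by norm_num)]
        linarith
      have h8 : 0 ≤ 1/c * ‖w‖ := by positivity
      calc 1/c * ‖w‖ * (1 - ‖w‖)⁻¹ ≤ 1/c * ‖w‖ * 2 := mul_le_mul_of_nonneg_left h7 h8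
      _ = 2/c * ‖w‖ := by ring

theorem euler2 (p z : ℂ) (hp : ‖p‖ < 1) (hz : ∀ j : ℕ, 1 + z * p^j ≠ 0) :
    HasSum (fun k => p^(tri k) * z^k / qPoch p p k) (∏' j, (1 + z * p^j)) := by
  obtain ⟨c, hc, hcb⟩ := qPoch_norm_lower hp
  have hM : Multipliable (fun j : ℕ => 1 + z * p^j) :=
    multipliable_one_add (fun j => z * p^j)
      ((summable_geometric_of_norm_lt_one hp).mul_left z) hz
  have hPN : Tendsto (fun N => ∏ j ∈ range N, (1 + z * p^j)) atTop
      (𝓝 (∏' j, (1 + z * p^j))) := HasProd.tendsto_prod_nat hM.hasProd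
  have hev : ∀ᶠ N : ℕ in atTop, ‖p^N * z‖ ≤ 1/2 := by
    have h1 : Tendsto (fun N : ℕ => ‖p^N * z‖) atTop (𝓝 0) := by
      have := (tendsto_pow_atTop_nhds_zero_of_norm_lt_one hp).mul_const z
      simpa using this.norm
    filter_upwards [h1.eventually_lt_const (by norm_num : (0:ℝ) < 1/2)] with N hN using hN.le
  have hFN : Tendsto (fun N => ∑' k, eterm p (p^N * z) k) atTop (𝓝 1) := by
    have h0 : Tendsto (fun N => (∑' k, eterm p (p^N * z) k) - 1) atTop (𝓝 0) := by
      apply squeeze_zero_norm' (a := fun N => 2/c * (‖z‖ * ‖p‖^N))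
      · filter_upwards [hev] with N hN
        have := F_near_one hp hc hcb (p^N * z) hN
        calc ‖(∑' k, eterm p (p^N*z) k) - 1‖ ≤ 2/c * ‖p^N * z‖ := this
        _ = 2/c * (‖z‖ * ‖p‖^N) := by rw [norm_mul, norm_pow]; ring
      · have h2 : Tendsto (fun N : ℕ => ‖p‖^N) atTop (𝓝 0) :=
          tendsto_pow_atTop_nhds_zero_of_norm_lt_one (by simpa using hp)
        have := (h2.const_mul ‖z‖).const_mul (2/c)
        simpa using this
    have := h0.add_const 1
    simpa using this
  have hmul : Tendsto (fun N => (∏ j ∈ range N, (1 + z * p^j)) *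
      ∑' k, eterm p (p^N * z) k) atTop (𝓝 ((∏' j, (1 + z * p^j)) * 1)) := hPN.mul hFN
  have hconst : ∀ N, (∏ j ∈ range N, (1 + z * p^j)) * ∑' k, eterm p (p^N * z) k
      = ∑' k, eterm p z k := fun N => (euler_iter hp z N).symm
  have heqc : Tendsto (fun _ : ℕ => ∑' k, eterm p z k) atTop
      (𝓝 ((∏' j, (1 + z * p^j)) * 1)) := by
    apply hmul.congr
    intro N; rw [hconst N]
  have hfin : ∑' k, eterm p z k = ∏' j, (1 + z * p^j) := by
    have := tendsto_nhds_unique heqc tendsto_const_nhds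
    rw [← this, mul_one]
  have := (eterm_summable hp z).hasSum
  rw [hfin] at this
  exact this

end Euler

section Cauchy
variable {p : ℂ}

noncomputable def gb (p : ℂ) (n k : ℕ) : ℂ :=
  qPoch p p n / (qPoch p p k * qPoch p p (n - k))

lemma gb_zero (hp : ‖p‖ < 1) (n : ℕ) : gb p n 0 = 1 := by
  unfold gb
  rw [Nat.sub_zero, qPoch_zero]
  field_simp [qQ_ne hp]

lemma gb_self (hp : ‖p‖ < 1) (n : ℕ) : gb p n n = 1 := by
  unfold gb
  rw [Nat.sub_self, qPoch_zero]
  field_simp [qQ_ne hp]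

lemma gb_pascal (hp : ‖p‖ < 1) (k m : ℕ) :
    gb p (k+1+m+1) (k+1) = gb p (k+1+m) (k+1) + p^(m+1) * gb p (k+1+m) k := by
  have ha : (k+1+m+1) - (k+1) = m+1 := by omega
  have hb : (k+1+m) - (k+1) = m := by omega
  have hc : (k+1+m) - k = m+1 := by omega
  unfold gb
  rw [ha, hb, hc]
  rw [qPoch_succ p p (k+1+m), qPoch_succ p p m, qPoch_succ p p k]
  have h1 := qQ_ne hp (k+1+m)
  have h2 := qQ_ne hp k
  have h3 := qQ_ne hp m
  have f1 := qfac_ne hp (k+1+m)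
  have f2 := qfac_ne hp k
  have f3 := qfac_ne hp m
  field_simp
  ring

lemma gb_pascal' (hp : ‖p‖ < 1) {k N : ℕ} (h : k < N) :
    gb p (N+1) (k+1) = gb p N (k+1) + p^(N-k) * gb p N k := by
  obtain ⟨m, rfl⟩ : ∃ m, N = k+1+m := ⟨N-(k+1), by omega⟩
  have : (k+1+m) - k = m+1 := by omega
  rw [this]
  exact gb_pascal hp k m

lemma cauchy_binom (hp : ‖p‖ < 1) (z : ℂ) (N : ℕ) :
    ∏ j ∈ range N, (1 + z * p^j) = ∑ k ∈ range (N+1), gb p N k * p^(tri k) * z^k := by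
  induction N with
  | zero => simp [gb_self hp 0, tri]
  | succ N ih =>
    rw [prod_range_succ, ih]
    set f : ℕ → ℕ → ℂ := fun n k => gb p n k * p^(tri k) * z^k with hf
    have step1 : ∑ k ∈ range (N+2), f (N+1) k
        = (f (N+1) 0 + ∑ k ∈ range N, f (N+1) (k+1)) + f (N+1) (N+1) := by
      rw [Finset.sum_range_succ, Finset.sum_range_succ' (f (N+1)) N]
      ring
    have step2 : ∀ k ∈ range N, f (N+1) (k+1)
        = f N (k+1) + (z * p^N) * f N k := by
      intro k hk
      have hkN : k < N := Finset.mem_range.mp hk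
      simp only [hf]
      rw [gb_pascal' hp hkN]
      have hpow : p^(N-k) * p^(tri (k+1)) * z^(k+1)
          = (z * p^N) * (p^(tri k) * z^k) := by
        rw [tri_succ, ← pow_add]
        have : N - k + (tri k + k) = N + tri k := by omega
        rw [this, pow_add]
        ring
      calc (gb p N (k+1) + p^(N-k) * gb p N k) * p^(tri (k+1)) * z^(k+1)
          = gb p N (k+1) * p^(tri (k+1)) * z^(k+1)
            + gb p N k * (p^(N-k) * p^(tri (k+1)) * z^(k+1)) := by ring
        _ = _ := by rw [hpow]; ring
    have step3 : f (N+1) 0 = f N 0 := by simp [hf, gb_zero hp]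
    have step4 : f (N+1) (N+1) = (z * p^N) * f N N := by
      simp only [hf, gb_self hp]
      rw [tri_succ, pow_add]
      ring
    rw [step1, Finset.sum_congr rfl step2, step3, step4, Finset.sum_add_distrib]
    have e1 : f N 0 + ∑ k ∈ range N, f N (k+1) = ∑ k ∈ range (N+1), f N k := by
      rw [Finset.sum_range_succ' (f N) N]; ring
    have e2 : ∑ k ∈ range N, (z*p^N) * f N k + (z*p^N) * f N N
        = (z*p^N) * ∑ k ∈ range (N+1), f N k := by
      rw [Finset.sum_range_succ, mul_add, Finset.mul_sum]
    calc (∑ k ∈ range (N+1), f N k) * (1 + z * p^N)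
        = (f N 0 + ∑ k ∈ range N, f N (k+1))
          + (∑ k ∈ range N, (z*p^N) * f N k + (z*p^N) * f N N) := by
          rw [e1, e2]; ring
      _ = _ := by ring
  
end Cauchy

lemma norm_pow_le_one {x : ℂ} (hx : ‖x‖ < 1) (n : ℕ) : ‖x^n‖ ≤ 1 := by
  rw [norm_pow]; exact pow_le_one₀ (norm_nonneg x) hx.le

lemma norm_pow_lt_one {x : ℂ} (hx : ‖x‖ < 1) {n : ℕ} (hn : n ≠ 0) : ‖x^n‖ < 1 := by
  rw [norm_pow]; exact pow_lt_one₀ (norm_nonneg x) hx hn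

lemma norm_mul_lt_one {x y : ℂ} (h1 : ‖x‖ < 1) (h2 : ‖y‖ ≤ 1) : ‖x * y‖ < 1 := by
  rw [norm_mul]
  nlinarith [norm_nonneg x, norm_nonneg y]

/-- the double-sum term -/
noncomputable def uu (q : ℂ) : ℕ × ℕ → ℂ := fun km =>
  (q^2)^(tri (km.1+km.2+1)) * (q^2)^(tri km.1) * q^km.1
    / (qPoch (q^2) (q^2) km.1 * qPoch (q^2) (q^2) km.2)

set_option maxHeartbeats 2000000 in
theorem stmt0 (q : ℂ) (hq : ‖q‖ < 1) :
    ∑' n : ℕ, q ^ (n ^ 2 + n) * qPoch (-q) (q ^ 2) n / qPoch (q ^ 2) (q ^ 2) n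
      = qPochInf (-q ^ 2) (q ^ 4) * qPochInf (-q ^ 3) (q ^ 4) * qPochInf (-q ^ 4) (q ^ 4) := by
  have hq' : ‖q‖ < 1 := hq
  set p : ℂ := q^2 with hpdef
  have hp : ‖p‖ < 1 := norm_pow_lt_one hq' two_ne_zero
  have hp2 : ‖p^2‖ < 1 := norm_pow_lt_one hp two_ne_zero
  obtain ⟨c, hc, hcb⟩ := qPoch_norm_lower hp
  -- Step A : the summand expands as a finite sum of uu
  have hA : ∀ n : ℕ, q ^ (n^2+n) * qPoch (-q) p n / qPoch p p n
      = ∑ k ∈ range (n+1), uu q (k, n-k) := by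
    intro n
    have h1 : qPoch (-q) p n = ∑ k ∈ range (n+1), gb p n k * p^(tri k) * q^k := by
      rw [← cauchy_binom hp q n]
      unfold qPoch
      exact Finset.prod_congr rfl fun j _ => by ring
    have h2 : q^(n^2+n) = p^(tri (n+1)) := by
      rw [hpdef, ← pow_mul]
      congr 1
      have h3 := two_tri (n+1)
      simp only [Nat.add_sub_cancel] at h3
      have h4 : (n+1)*n = n^2+n := by ring
      omega
    rw [h2, h1, Finset.mul_sum, Finset.sum_div]
    apply Finset.sum_congr rfl
    intro k hk
    have hkn : k ≤ n := Nat.lt_succ_iff.mp (Finset.mem_range.mp hk)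
    show p^(tri (n+1)) * (gb p n k * p^(tri k) * q^k) / qPoch p p n = uu q (k, n-k)
    unfold uu gb
    simp only
    have hke : k + (n-k) + 1 = n+1 := by omega
    rw [hke]
    rw [← hpdef]
    field_simp [qQ_ne hp]
  -- Step B : summability of uu
  have hu : Summable (uu q) := by
    have hgeo : Summable (fun n : ℕ => ‖p‖^n) :=
      summable_geometric_of_lt_one (norm_nonneg p) hp
    have hbd : Summable (fun km : ℕ × ℕ => 1/(c*c) * (‖p‖^km.1 * ‖p‖^km.2)) :=
      (hgeo.mul_of_nonneg hgeo (fun n => by positivity) (fun n => by positivity)).mul_left _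
    apply Summable.of_norm_bounded hbd
    rintro ⟨k, m⟩
    unfold uu
    simp only
    rw [norm_div, norm_mul, norm_mul, norm_mul]
    have e1 : ‖(p:ℂ)^(tri (k+m+1))‖ ≤ ‖p‖^(k+m) := by
      rw [norm_pow]
      exact pow_le_pow_of_le_one (norm_nonneg p) hp.le (tri_ge (k+m))
    have e2 : ‖(p:ℂ)^(tri k)‖ ≤ 1 := norm_pow_le_one hp _
    have e3 : ‖q^k‖ ≤ 1 := norm_pow_le_one hq' _
    have e4 : c * c ≤ ‖qPoch p p k‖ * ‖qPoch p p m‖ := by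
      have := hcb k; have := hcb m
      nlinarith
    have e5 : (0:ℝ) < ‖qPoch p p k‖ * ‖qPoch p p m‖ := by nlinarith
    rw [div_le_iff₀ e5]
    have e6 : ‖p‖^(k+m) = ‖p‖^k * ‖p‖^m := pow_add _ _ _
    have e7 : ‖(p:ℂ)^(tri (k+m+1))‖ * ‖(p:ℂ)^(tri k)‖ * ‖q^k‖ ≤ ‖p‖^k * ‖p‖^m := by
      have n1 := norm_nonneg ((p:ℂ)^(tri (k+m+1)))
      have n2 := norm_nonneg ((p:ℂ)^(tri k))
      have n3 := norm_nonneg (q^k)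
      have m1 : ‖(p:ℂ)^(tri (k+m+1))‖ * ‖(p:ℂ)^(tri k)‖ ≤ ‖p‖^(k+m) := by nlinarith
      have m2 : ‖(p:ℂ)^(tri (k+m+1))‖ * ‖(p:ℂ)^(tri k)‖ * ‖q^k‖ ≤ ‖p‖^(k+m) := by nlinarith
      rw [e6] at m2
      exact m2
    have e8 : 1/(c*c) * (‖p‖^k * ‖p‖^m) * (‖qPoch p p k‖ * ‖qPoch p p m‖)
        ≥ 1/(c*c) * (‖p‖^k * ‖p‖^m) * (c*c) := by
      apply mul_le_mul_of_nonneg_left e4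
      positivity
    have e9 : 1/(c*c) * (‖p‖^k * ‖p‖^m) * (c*c) = ‖p‖^k * ‖p‖^m := by
      field_simp
    nlinarith
  -- Step C : diagonal resummation
  have hC : ∑' n : ℕ, q ^ (n^2+n) * qPoch (-q) p n / qPoch p p n
      = ∑' km : ℕ × ℕ, uu q km := by
    have hsig : Summable (fun x : Σ n : ℕ, Finset.HasAntidiagonal.antidiagonal n => uu q x.2) :=
      Finset.HasAntidiagonal.sigmaAntidiagonalEquivProd.summable_iff.mpr hu
    calc ∑' n : ℕ, q ^ (n^2+n) * qPoch (-q) p n / qPoch p p n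
        = ∑' (n : ℕ), ∑' (c : {x // x ∈ Finset.HasAntidiagonal.antidiagonal n}), uu q ↑c := by
          apply tsum_congr
          intro n
          rw [hA n]
          rw [Finset.tsum_subtype (Finset.HasAntidiagonal.antidiagonal n) (uu q),
            Finset.Nat.sum_antidiagonal_eq_sum_range_succ_mk]
      _ = ∑' (x : Σ n : ℕ, Finset.HasAntidiagonal.antidiagonal n), uu q ↑x.2 :=
          (Summable.tsum_sigma' (fun n => (hasSum_fintype _).summable) hsig).symm
      _ = ∑' km : ℕ × ℕ, uu q km := Finset.HasAntidiagonal.sigmaAntidiagonalEquivProd.tsum_eq (uu q)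
  -- Step D : iterated sum
  have hD : ∑' km : ℕ × ℕ, uu q km = ∑' k : ℕ, ∑' m : ℕ, uu q (k, m) :=
    Summable.tsum_prod' hu hu.prod_factor
  -- infinite product of (1 + p p^j)
  have hMf : Multipliable (fun j : ℕ => 1 + p * p^j) := by
    apply multipliable_one_add
    · exact (summable_geometric_of_norm_lt_one hp).mul_left p
    · intro j; exact one_add_ne_zero' (norm_mul_lt_one hp (norm_pow_le_one hp j))
  set Pf : ℂ := ∏' j : ℕ, (1 + p * p^j) with hPf
  -- Step E : inner sums via Euler
  have hE : ∀ k : ℕ, ∑' m : ℕ, uu q (k, m)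
      = Pf * ((p^2)^(tri k) * (q^3)^k / qPoch (p^2) (p^2) k) := by
    intro k
    -- the inner Euler sum
    have hz1 : ∀ j : ℕ, (1:ℂ) + p^(k+1) * p^j ≠ 0 := fun j =>
      one_add_ne_zero' (norm_mul_lt_one (norm_pow_lt_one hp (Nat.succ_ne_zero k))
        (norm_pow_le_one hp j))
    have he := euler2 p (p^(k+1)) hp hz1
    have hsplit : ∀ m : ℕ, uu q (k, m)
        = ((p:ℂ)^(tri k) * p^(tri (k+1)) * q^k / qPoch p p k)
          * (p^(tri m) * (p^(k+1))^m / qPoch p p m) := by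
      intro m
      unfold uu
      simp only [← hpdef]
      have hexp : tri (k+m+1) = tri (k+1) + (tri m + (k+1)*m) := by
        have h1 := tri_add k m
        have h2 := tri_succ m
        have h3 : tri (k+1) + (tri m + m) + k*m = tri (k+1) + (tri m + (k+1)*m) := by ring
        omega
      rw [hexp]
      rw [pow_add, pow_add, pow_mul]
      field_simp [qQ_ne hp]
    rw [tsum_congr hsplit, tsum_mul_left, he.tsum_eq]
    -- now the tprod shift
    have htail : Multipliable (fun j : ℕ => 1 + p * p^(j+k)) := by
      apply multipliable_one_add
      · have : Summable (fun j : ℕ => (p * p^k) * p^j) :=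
          (summable_geometric_of_norm_lt_one hp).mul_left _
        apply this.congr
        intro j
        rw [pow_add]
        ring
      · intro j; exact one_add_ne_zero' (norm_mul_lt_one hp (norm_pow_le_one hp _))
    have hshift : (∏ i ∈ range k, (1 + p * p^i)) * (∏' j : ℕ, (1 + p * p^(j+k))) = Pf :=
      Multipliable.prod_mul_tprod_nat_mul' htail
    have hDk : (∏ i ∈ range k, ((1:ℂ) + p * p^i)) ≠ 0 :=
      Finset.prod_ne_zero_iff.mpr fun i _ =>
        one_add_ne_zero' (norm_mul_lt_one hp (norm_pow_le_one hp i))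
    have heqprod : (∏' j : ℕ, ((1:ℂ) + p^(k+1) * p^j)) = ∏' j : ℕ, (1 + p * p^(j+k)) := by
      apply tprod_congr
      intro j
      rw [pow_add, pow_add]
      ring_nf
    have hT : (∏' j : ℕ, ((1:ℂ) + p^(k+1) * p^j))
        = Pf / (∏ i ∈ range k, (1 + p * p^i)) := by
      rw [heqprod, eq_div_iff hDk]
      rw [mul_comm]
      exact hshift
    rw [hT]
    -- final algebra : collapse to base p^2
    have hQ2 : qPoch p p k * (∏ i ∈ range k, ((1:ℂ) + p * p^i)) = qPoch (p^2) (p^2) k := by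
      unfold qPoch
      rw [← Finset.prod_mul_distrib]
      apply Finset.prod_congr rfl
      intro i _
      have hsq : ((p:ℂ) * p^i)^2 = p^2 * (p^2)^i := by ring
      linear_combination (-1 : ℂ) * hsq
    have hpow2 : (p:ℂ)^(tri k) * p^(tri (k+1)) * q^k = (p^2)^(tri k) * (q^3)^k := by
      have hexp2 : tri k + tri (k+1) = 2 * tri k + k := by
        have := tri_succ k; omega
      calc (p:ℂ)^(tri k) * p^(tri (k+1)) * q^k = p^(tri k + tri (k+1)) * q^k := by
            rw [pow_add]
        _ = p^(2*tri k + k) * q^k := by rw [hexp2]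
        _ = (p^2)^(tri k) * (p^k * q^k) := by ring
        _ = (p^2)^(tri k) * (q^3)^k := by
            rw [hpdef]; ring
    calc (p:ℂ)^(tri k) * p^(tri (k+1)) * q^k / qPoch p p k
          * (Pf / ∏ i ∈ range k, (1 + p * p^i))
        = Pf * ((p:ℂ)^(tri k) * p^(tri (k+1)) * q^k
            / (qPoch p p k * ∏ i ∈ range k, (1 + p * p^i))) := by
          rw [div_mul_div_comm, mul_comm ((p:ℂ)^(tri k) * p^(tri (k+1)) * q^k) Pf,
            mul_div_assoc]
      _ = Pf * ((p^2)^(tri k) * (q^3)^k / qPoch (p^2) (p^2) k) := by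
          rw [hQ2, hpow2]
  -- Step F : sum the Euler series at base p^2
  have hz3 : ∀ j : ℕ, (1:ℂ) + q^3 * (p^2)^j ≠ 0 := fun j =>
    one_add_ne_zero' (norm_mul_lt_one (norm_pow_lt_one hq' (by norm_num))
      (norm_pow_le_one hp2 j))
  have he3 := (euler2 (p^2) (q^3) hp2 hz3).tsum_eq
  have hFinal : ∑' k : ℕ, ∑' m : ℕ, uu q (k, m)
      = Pf * ∏' j : ℕ, (1 + q^3 * (p^2)^j) := by
    rw [tsum_congr hE, tsum_mul_left, he3]
  -- Step G : identify the products
  have hodd3 : ∏' j : ℕ, ((1:ℂ) + q^3 * (p^2)^j) = qPochInf (-q^3) (q^4) := by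
    unfold qPochInf
    apply tprod_congr
    intro j
    have h4 : ((p:ℂ)^2)^j = (q^4)^j := by rw [hpdef]; ring
    rw [h4]
    ring
  have hMe : Multipliable (fun j : ℕ => (1:ℂ) + p * p^(2*j)) := by
    apply multipliable_one_add
    · have : Summable (fun j : ℕ => p * (p^2)^j) :=
        (summable_geometric_of_norm_lt_one hp2).mul_left p
      apply this.congr
      intro j
      ring
    · intro j; exact one_add_ne_zero' (norm_mul_lt_one hp (norm_pow_le_one hp _))
  have hMo : Multipliable (fun j : ℕ => (1:ℂ) + p * p^(2*j+1)) := by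
    apply multipliable_one_add
    · have : Summable (fun j : ℕ => (p*p) * (p^2)^j) :=
        (summable_geometric_of_norm_lt_one hp2).mul_left (p*p)
      apply this.congr
      intro j
      ring
    · intro j; exact one_add_ne_zero' (norm_mul_lt_one hp (norm_pow_le_one hp _))
  have hsplitPf : (∏' k : ℕ, ((1:ℂ) + p * p^(2*k))) * (∏' k : ℕ, ((1:ℂ) + p * p^(2*k+1)))
      = Pf := tprod_even_mul_odd (f := fun j => (1:ℂ) + p * p^j) hMe hMo
  have heven : ∏' k : ℕ, ((1:ℂ) + p * p^(2*k)) = qPochInf (-q^2) (q^4) := by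
    unfold qPochInf
    apply tprod_congr
    intro k
    have h5 : (p:ℂ) * p^(2*k) = q^2 * (q^4)^k := by rw [hpdef]; ring
    rw [h5]
    ring
  have hodd4 : ∏' k : ℕ, ((1:ℂ) + p * p^(2*k+1)) = qPochInf (-q^4) (q^4) := by
    unfold qPochInf
    apply tprod_congr
    intro k
    have h6 : (p:ℂ) * p^(2*k+1) = q^4 * (q^4)^k := by rw [hpdef]; ring
    rw [h6]
    ring
  have hPfval : Pf = qPochInf (-q^2) (q^4) * qPochInf (-q^4) (q^4) := by
    rw [← hsplitPf, heven, hodd4]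
  calc ∑' n : ℕ, q ^ (n ^ 2 + n) * qPoch (-q) (q^2) n / qPoch (q^2) (q^2) n
      = ∑' km : ℕ × ℕ, uu q km := hC
    _ = ∑' k : ℕ, ∑' m : ℕ, uu q (k, m) := hD
    _ = Pf * ∏' j : ℕ, (1 + q^3 * (p^2)^j) := hFinal
    _ = (qPochInf (-q^2) (q^4) * qPochInf (-q^4) (q^4)) * qPochInf (-q^3) (q^4) := by
        rw [hPfval, hodd3]
    _ = qPochInf (-q^2) (q^4) * qPochInf (-q^3) (q^4) * qPochInf (-q^4) (q^4) := by
        ring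
end

section
/- For |q|<1, the product identity (-q²;q⁴)_∞ (-q³;q⁴)_∞ (-q⁴;q⁴)_∞ = 1 / ((q²;q⁸)_∞ (q³;q⁸)_∞ (q⁷;q⁸)_∞) holds. -/
open scoped BigOperators

open Filter Topology

lemma logSummable' (a w : ℂ) (hw : ‖w‖ < 1) :
    Summable fun j : ℕ => Complex.log (1 - a * w ^ j) := by
  have hg : Summable (fun j : ℕ => (3/2 : ℝ) * (‖a‖ * ‖w‖ ^ j)) :=
    (((summable_geometric_of_lt_one (norm_nonneg w) hw).mul_left _).mul_left _)
  apply Summable.of_norm_bounded_eventually hg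
  rw [Nat.cofinite_eq_atTop]
  have h0 : Tendsto (fun j : ℕ => ‖a‖ * ‖w‖ ^ j) atTop (𝓝 0) := by
    simpa using (tendsto_pow_atTop_nhds_zero_of_lt_one (norm_nonneg w) hw).const_mul
      (‖a‖)
  filter_upwards [h0.eventually_le_const (by norm_num : (0:ℝ) < 1/2)] with j hj
  have h1 : ‖-(a * w ^ j)‖ ≤ 1/2 := by
    simpa [norm_mul, norm_pow] using hj
  have := Complex.norm_log_one_add_half_le_self h1
  simpa [sub_eq_add_neg, norm_mul, norm_pow] using this

lemma factor_ne' (a w : ℂ) (ha : ‖a‖ < 1) (hw : ‖w‖ < 1) (j : ℕ) :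
    (1 : ℂ) - a * w ^ j ≠ 0 := by
  intro h
  have h1 : a * w ^ j = 1 := by linear_combination -h
  have : ‖a * w ^ j‖ < 1 := by
    rw [norm_mul, norm_pow]
    calc ‖a‖ * ‖w‖ ^ j ≤ ‖a‖ * 1 := by
          exact mul_le_mul_of_nonneg_left (pow_le_one₀ (norm_nonneg w) hw.le)
            (norm_nonneg a)
      _ = ‖a‖ := mul_one _
      _ < 1 := ha
  rw [h1] at this; simp at this

lemma multipliable_aux {f : ℕ → ℂ} (a w : ℂ) (ha : ‖a‖ < 1)
    (hw : ‖w‖ < 1) (h : ∀ j, f j = 1 - a * w ^ j) : Multipliable f := by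
  have := Complex.multipliable_of_summable_log (logSummable' a w hw)
  exact this.congr (fun j => (h j).symm)

lemma tprod_ne_aux {f : ℕ → ℂ} (a w : ℂ) (ha : ‖a‖ < 1)
    (hw : ‖w‖ < 1) (h : ∀ j, f j = 1 - a * w ^ j) : (∏' j, f j) ≠ 0 := by
  have key := Complex.cexp_tsum_eq_tprod (fun j => factor_ne' a w ha hw j)
    (logSummable' a w hw)
  have := key
  have heq : (∏' j, f j) = (∏' j : ℕ, (1 - a * w ^ j)) := tprod_congr h
  rw [heq, ← this]
  exact Complex.exp_ne_zero _

lemma habs' {q : ℂ} (hq : ‖q‖ < 1) {e : ℕ} (he : e ≠ 0) :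
    ‖q ^ e‖ < 1 := by
  rw [norm_pow]; exact pow_lt_one₀ (norm_nonneg q) hq he

lemma habs'' {q : ℂ} (hq : ‖q‖ < 1) {e : ℕ} (he : e ≠ 0) :
    ‖-(q ^ e)‖ < 1 := by rw [norm_neg]; exact habs' hq he

-- (1 + q^e x)(1 - q^e x) = 1 - q^(2e) x², merged infinite products
lemma L_wv {q : ℂ} (hq : ‖q‖ < 1) (e : ℕ) (he : e ≠ 0) :
    (∏' j : ℕ, (1 + q ^ e * (q ^ 4) ^ j)) * (∏' j : ℕ, (1 - q ^ e * (q ^ 4) ^ j))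
      = ∏' k : ℕ, (1 - q ^ (2 * e) * (q ^ 8) ^ k) := by
  have m1 : Multipliable (fun j : ℕ => 1 + q ^ e * (q ^ 4) ^ j) :=
    multipliable_aux (-(q ^ e)) (q ^ 4) (habs'' hq he) (habs' hq (by norm_num))
      (fun j => by ring)
  have m2 : Multipliable (fun j : ℕ => 1 - q ^ e * (q ^ 4) ^ j) :=
    multipliable_aux (q ^ e) (q ^ 4) (habs' hq he) (habs' hq (by norm_num))
      (fun j => rfl)
  rw [← m1.tprod_mul m2]
  exact tprod_congr (fun j => by ring)

-- even/odd split of a q^4 product into two q^8 products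
set_option maxHeartbeats 1000000 in
lemma L_split {q : ℂ} (hq : ‖q‖ < 1) (e : ℕ) (he : e ≠ 0) :
    (∏' j : ℕ, (1 - q ^ e * (q ^ 4) ^ j))
      = (∏' k : ℕ, (1 - q ^ e * (q ^ 8) ^ k)) * (∏' k : ℕ, (1 - q ^ (e + 4) * (q ^ 8) ^ k)) := by
  have heven : Multipliable (fun k : ℕ => 1 - q ^ e * (q ^ 4) ^ (2 * k)) :=
    multipliable_aux (q ^ e) (q ^ 8) (habs' hq he) (habs' hq (by norm_num))
      (fun k => by ring)
  have hodd : Multipliable (fun k : ℕ => 1 - q ^ e * (q ^ 4) ^ (2 * k + 1)) :=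
    multipliable_aux (q ^ (e + 4)) (q ^ 8) (habs' hq (by omega)) (habs' hq (by norm_num))
      (fun k => by ring)
  rw [← tprod_even_mul_odd heven hodd]
  congr 1
  · exact tprod_congr (fun k => by ring)
  · exact tprod_congr (fun k => by ring)

theorem stmt4 (q : ℂ) (hq : ‖q‖ < 1) :
    qPochInf (-q ^ 2) (q ^ 4) * qPochInf (-q ^ 3) (q ^ 4) * qPochInf (-q ^ 4) (q ^ 4)
      = 1 / (qPochInf (q ^ 2) (q ^ 8) * qPochInf (q ^ 3) (q ^ 8) * qPochInf (q ^ 7) (q ^ 8)) := by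
  -- abbreviations
  set W2 := ∏' j : ℕ, (1 + q ^ 2 * (q ^ 4) ^ j) with hW2
  set W3 := ∏' j : ℕ, (1 + q ^ 3 * (q ^ 4) ^ j) with hW3
  set W4 := ∏' j : ℕ, (1 + q ^ 4 * (q ^ 4) ^ j) with hW4
  set V2 := ∏' j : ℕ, (1 - q ^ 2 * (q ^ 4) ^ j) with hV2
  set V3 := ∏' j : ℕ, (1 - q ^ 3 * (q ^ 4) ^ j) with hV3
  set V4 := ∏' j : ℕ, (1 - q ^ 4 * (q ^ 4) ^ j) with hV4
  have U : ∀ e : ℕ, qPochInf (q ^ e) (q ^ 8) = ∏' k : ℕ, (1 - q ^ e * (q ^ 8) ^ k) :=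
    fun e => rfl
  -- rewrite LHS factors
  have hl2 : qPochInf (-q ^ 2) (q ^ 4) = W2 := tprod_congr (fun j => by ring)
  have hl3 : qPochInf (-q ^ 3) (q ^ 4) = W3 := tprod_congr (fun j => by ring)
  have hl4 : qPochInf (-q ^ 4) (q ^ 4) = W4 := tprod_congr (fun j => by ring)
  rw [hl2, hl3, hl4]
  -- merge lemmas, specialized
  have f2 := L_wv hq 2 (by norm_num); norm_num at f2
  have f3 := L_wv hq 3 (by norm_num); norm_num at f3
  have f4 := L_wv hq 4 (by norm_num); norm_num at f4
  have s2 := L_split hq 2 (by norm_num); norm_num at s2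
  have s3 := L_split hq 3 (by norm_num); norm_num at s3
  have s4 := L_split hq 4 (by norm_num); norm_num at s4
  simp only [← hW2, ← hW3, ← hW4, ← hV2, ← hV3, ← hV4] at f2 f3 f4 s2 s3 s4
  -- nonvanishing of V's
  have nv2 : V2 ≠ 0 := tprod_ne_aux (q ^ 2) (q ^ 4) (habs' hq (by norm_num))
    (habs' hq (by norm_num)) (fun j => rfl)
  have nv3 : V3 ≠ 0 := tprod_ne_aux (q ^ 3) (q ^ 4) (habs' hq (by norm_num))
    (habs' hq (by norm_num)) (fun j => rfl)
  have nv4 : V4 ≠ 0 := tprod_ne_aux (q ^ 4) (q ^ 4) (habs' hq (by norm_num))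
    (habs' hq (by norm_num)) (fun j => rfl)
  rw [U 2, U 3, U 7]
  set U2 := ∏' k : ℕ, (1 - q ^ 2 * (q ^ 8) ^ k)
  set U3 := ∏' k : ℕ, (1 - q ^ 3 * (q ^ 8) ^ k)
  set U4 := ∏' k : ℕ, (1 - q ^ 4 * (q ^ 8) ^ k)
  set U6 := ∏' k : ℕ, (1 - q ^ 6 * (q ^ 8) ^ k)
  set U7 := ∏' k : ℕ, (1 - q ^ 7 * (q ^ 8) ^ k)
  set U8 := ∏' k : ℕ, (1 - q ^ 8 * (q ^ 8) ^ k)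
  -- key identity
  have key : (W2 * W3 * W4) * (U2 * U3 * U7) = 1 := by
    have hcancel : ((W2 * W3 * W4) * (U2 * U3 * U7)) * (V2 * V3 * V4)
        = 1 * (V2 * V3 * V4) := by
      calc ((W2 * W3 * W4) * (U2 * U3 * U7)) * (V2 * V3 * V4)
          = (W2 * V2) * (W3 * V3) * (W4 * V4) * (U2 * U3 * U7) := by ring
        _ = U4 * U6 * U8 * (U2 * U3 * U7) := by rw [f2, f3, f4]
        _ = (U2 * U6) * (U3 * U7) * (U4 * U8) := by ring
        _ = V2 * V3 * V4 := by rw [← s2, ← s3, ← s4]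
        _ = 1 * (V2 * V3 * V4) := by ring
    exact mul_right_cancel₀ (mul_ne_zero (mul_ne_zero nv2 nv3) nv4) hcancel
  exact eq_one_div_of_mul_eq_one_right (by rw [mul_comm]; exact key)
end

section
/- For |q|<1, the double series identity ∑_{n₁,n₂≥0} q^{n₁² + 2n₁n₂ + 2n₂² + 2n₂} (-q;q²)_{n₂} / ((q²;q²)_{n₁} (q⁴;q⁴)_{n₂}) = (-q;q⁴)_∞ (-q³;q⁴)_∞ (-q⁴;q⁴)_∞ holds. -/
open scoped BigOperators

section Aux
open Finset Filter Topology

lemma two_mul_choose_two (n : ℕ) : 2 * n.choose 2 + n = n ^ 2 := by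
  induction n with
  | zero => simp
  | succ n ih =>
    rw [Nat.choose_succ_succ, Nat.choose_one_right]
    ring_nf
    ring_nf at ih
    omega

lemma one_sub_ne_zero {a Q : ℂ} (ha : ‖a‖ < 1) (hQ : ‖Q‖ ≤ 1) (j : ℕ) :
    1 - a * Q ^ j ≠ 0 := by
  intro h
  have h1 : a * Q ^ j = 1 := by linear_combination -h
  have := congrArg norm h1
  rw [norm_mul, norm_pow, norm_one] at this
  have h2 : ‖a‖ * ‖Q‖ ^ j ≤ ‖a‖ * 1 := by
    have := pow_le_one₀ (norm_nonneg Q) hQ (n := j)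
    exact mul_le_mul_of_nonneg_left this (norm_nonneg a)
  rw [this] at h2
  simp only [mul_one] at h2
  linarith

lemma qPoch_ne_zero_s5 {a Q : ℂ} (ha : ‖a‖ < 1) (hQ : ‖Q‖ ≤ 1) (n : ℕ) :
    qPoch a Q n ≠ 0 :=
  Finset.prod_ne_zero_iff.2 fun j _ => one_sub_ne_zero ha hQ j

set_option maxHeartbeats 1000000 in
lemma summable_norm_log {a Q : ℂ} (ha : ‖a‖ < 1) (hQ : ‖Q‖ < 1) :
    Summable fun j : ℕ => ‖Complex.log (1 - a * Q ^ j)‖ := by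
  obtain ⟨N, hN⟩ : ∃ N : ℕ, ‖Q‖ ^ N < 1 / 2 := by
    have := tendsto_pow_atTop_nhds_zero_of_lt_one (norm_nonneg Q) hQ
    exact (this.eventually (gt_mem_nhds (by norm_num))).exists
  rw [← summable_nat_add_iff N]
  have key : ∀ j : ℕ, ‖a * Q ^ (j + N)‖ ≤ 1 / 2 * ‖Q‖ ^ j := by
    intro j
    rw [norm_mul, norm_pow, pow_add, mul_comm (‖Q‖ ^ j)]
    calc ‖a‖ * (‖Q‖ ^ N * ‖Q‖ ^ j) ≤ 1 * (1 / 2 * ‖Q‖ ^ j) := by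
          apply mul_le_mul ha.le
          · exact mul_le_mul hN.le le_rfl (by positivity) (by norm_num)
          · positivity
          · norm_num
      _ = 1 / 2 * ‖Q‖ ^ j := one_mul _
  refine Summable.of_nonneg_of_le (fun j => norm_nonneg _) (fun j => ?_)
    (((summable_geometric_of_lt_one (norm_nonneg Q) hQ).mul_left (1/2 : ℝ)).mul_left (3/2 : ℝ))
  have h1 : ‖-(a * Q ^ (j + N))‖ ≤ 1 / 2 := by
    rw [norm_neg]
    calc ‖a * Q ^ (j + N)‖ ≤ 1 / 2 * ‖Q‖ ^ j := key j
      _ ≤ 1 / 2 * 1 := by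
          have := pow_le_one₀ (norm_nonneg Q) hQ.le (n := j)
          nlinarith [this]
      _ = 1 / 2 := by norm_num
  have h2 := Complex.norm_log_one_add_half_le_self h1
  rw [show (1 : ℂ) + -(a * Q ^ (j + N)) = 1 - a * Q ^ (j + N) by ring] at h2
  calc ‖Complex.log (1 - a * Q ^ (j + N))‖ ≤ 3 / 2 * ‖-(a * Q ^ (j + N))‖ := h2
    _ ≤ 3 / 2 * (1 / 2 * ‖Q‖ ^ j) := by
        rw [norm_neg]; nlinarith [key j]

lemma summable_log {a Q : ℂ} (ha : ‖a‖ < 1) (hQ : ‖Q‖ < 1) :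
    Summable fun j : ℕ => Complex.log (1 - a * Q ^ j) :=
  (summable_norm_log ha hQ).of_norm

lemma qPoch_eq_exp {a Q : ℂ} (ha : ‖a‖ < 1) (hQ : ‖Q‖ ≤ 1) (n : ℕ) :
    qPoch a Q n = Complex.exp (∑ j ∈ range n, Complex.log (1 - a * Q ^ j)) := by
  rw [Complex.exp_sum, qPoch]
  exact Finset.prod_congr rfl fun j _ => (Complex.exp_log (one_sub_ne_zero ha hQ j)).symm

lemma qPochInf_eq_exp {a Q : ℂ} (ha : ‖a‖ < 1) (hQ : ‖Q‖ < 1) :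
    qPochInf a Q = Complex.exp (∑' j : ℕ, Complex.log (1 - a * Q ^ j)) := by
  have := Complex.cexp_tsum_eq_tprod (f := fun (j : ℕ) => 1 - a * Q ^ j)
    (fun j => one_sub_ne_zero ha hQ.le j) (summable_log ha hQ)
  exact this.symm

lemma qPochInf_ne_zero {a Q : ℂ} (ha : ‖a‖ < 1) (hQ : ‖Q‖ < 1) :
    qPochInf a Q ≠ 0 := by
  rw [qPochInf_eq_exp ha hQ]; exact Complex.exp_ne_zero _

lemma multipliable_one_sub {a Q : ℂ} (ha : ‖a‖ < 1) (hQ : ‖Q‖ < 1) :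
    Multipliable fun j : ℕ => 1 - a * Q ^ j :=
  Complex.multipliable_of_summable_log (f := fun (j : ℕ) => 1 - a * Q ^ j)
    (summable_log ha hQ)

lemma qPoch_norm_lower_s5 {a Q : ℂ} (ha : ‖a‖ < 1) (hQ : ‖Q‖ < 1) (n : ℕ) :
    Real.exp (-(∑' j : ℕ, ‖Complex.log (1 - a * Q ^ j)‖)) ≤ ‖qPoch a Q n‖ := by
  rw [qPoch_eq_exp ha hQ.le, Complex.norm_exp]
  apply Real.exp_le_exp.2
  have h1 : ‖∑ j ∈ range n, Complex.log (1 - a * Q ^ j)‖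
      ≤ ∑' j : ℕ, ‖Complex.log (1 - a * Q ^ j)‖ := by
    refine (norm_sum_le _ _).trans ?_
    exact Summable.sum_le_tsum _ (fun j _ => norm_nonneg _) (summable_norm_log ha hQ)
  have h2 := Complex.abs_re_le_norm (∑ j ∈ range n, Complex.log (1 - a * Q ^ j))
  have h3 := abs_le.1 h2
  linarith [h3.1, h3.2]

lemma qPoch_norm_upper {a Q : ℂ} (ha : ‖a‖ < 1) (hQ : ‖Q‖ < 1) (n : ℕ) :
    ‖qPoch a Q n‖ ≤ Real.exp (∑' j : ℕ, ‖Complex.log (1 - a * Q ^ j)‖) := by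
  rw [qPoch_eq_exp ha hQ.le, Complex.norm_exp]
  apply Real.exp_le_exp.2
  have h1 : ‖∑ j ∈ range n, Complex.log (1 - a * Q ^ j)‖
      ≤ ∑' j : ℕ, ‖Complex.log (1 - a * Q ^ j)‖ := by
    refine (norm_sum_le _ _).trans ?_
    exact Summable.sum_le_tsum _ (fun j _ => norm_nonneg _) (summable_norm_log ha hQ)
  have h2 := Complex.abs_re_le_norm (∑ j ∈ range n, Complex.log (1 - a * Q ^ j))
  have h3 := abs_le.1 h2
  linarith [h3.1, h3.2]

set_option maxHeartbeats 1000000 in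
lemma qPochInf_split {a Q : ℂ} (ha : ‖a‖ < 1) (hQ : ‖Q‖ < 1) (m : ℕ) :
    qPochInf a Q = qPoch a Q m * qPochInf (a * Q ^ m) Q := by
  have haQ : ‖a * Q ^ m‖ < 1 := by
    rw [norm_mul, norm_pow]
    calc ‖a‖ * ‖Q‖ ^ m ≤ ‖a‖ * 1 :=
          mul_le_mul_of_nonneg_left (pow_le_one₀ (norm_nonneg Q) hQ.le) (norm_nonneg a)
      _ = ‖a‖ := mul_one _
      _ < 1 := ha
  have hs := summable_log ha hQ
  have hkey := Summable.sum_add_tsum_nat_add m hs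
  rw [qPochInf_eq_exp ha hQ, qPochInf_eq_exp haQ hQ, qPoch_eq_exp ha hQ.le, ← Complex.exp_add,
    ← hkey]
  congr 1
  congr 1
  apply tsum_congr
  intro j
  rw [show a * Q ^ m * Q ^ j = a * Q ^ (j + m) by rw [pow_add]; ring]

set_option maxHeartbeats 1000000 in
lemma qPochInf_even_odd {a Q : ℂ} (ha : ‖a‖ < 1) (hQ : ‖Q‖ < 1) :
    qPochInf a Q = qPochInf a (Q ^ 2) * qPochInf (a * Q) (Q ^ 2) := by
  have hQ2 : ‖Q ^ 2‖ < 1 := by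
    rw [norm_pow]; exact pow_lt_one₀ (norm_nonneg Q) hQ two_ne_zero
  have haQ : ‖a * Q‖ < 1 := by
    rw [norm_mul]
    calc ‖a‖ * ‖Q‖ ≤ ‖a‖ * 1 := mul_le_mul_of_nonneg_left hQ.le (norm_nonneg a)
      _ = ‖a‖ := mul_one _
      _ < 1 := ha
  have he : Summable fun k : ℕ => Complex.log (1 - a * Q ^ (2 * k)) := by
    refine (summable_log ha hQ2).congr fun k => ?_
    rw [show a * (Q ^ 2) ^ k = a * Q ^ (2 * k) by rw [← pow_mul]]
  have ho : Summable fun k : ℕ => Complex.log (1 - a * Q ^ (2 * k + 1)) := by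
    refine (summable_log haQ hQ2).congr fun k => ?_
    rw [show a * Q * (Q ^ 2) ^ k = a * Q ^ (2 * k + 1) by rw [← pow_mul, pow_succ]; ring]
  have hkey := tsum_even_add_odd (f := fun n => Complex.log (1 - a * Q ^ n)) he ho
  rw [qPochInf_eq_exp ha hQ, qPochInf_eq_exp ha hQ2, qPochInf_eq_exp haQ hQ2, ← Complex.exp_add,
    ← hkey]
  congr 1
  congr 1
  · exact tsum_congr fun k => by
      rw [show a * (Q ^ 2) ^ k = a * Q ^ (2 * k) by rw [← pow_mul]]
  · exact tsum_congr fun k => by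
      rw [show a * Q * (Q ^ 2) ^ k = a * Q ^ (2 * k + 1) by rw [← pow_mul, pow_succ]; ring]

set_option maxHeartbeats 1600000 in
theorem euler {Q : ℂ} (hQ : ‖Q‖ < 1) {z : ℂ} (hz : ‖z‖ < 1) :
    ∑' n : ℕ, Q ^ (n.choose 2) * z ^ n / qPoch Q Q n = qPochInf (-z) Q := by
  set T : ℝ := ∑' j : ℕ, ‖Complex.log (1 - Q * Q ^ j)‖ with hT
  set c : ℝ := Real.exp (-T) with hc
  have hc0 : 0 < c := Real.exp_pos _
  have hlow : ∀ n, c ≤ ‖qPoch Q Q n‖ := fun n => qPoch_norm_lower_s5 hQ hQ n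
  have hQn : ∀ n, qPoch Q Q n ≠ 0 := qPoch_ne_zero_s5 hQ hQ.le
  set a : ℕ → ℂ := fun n => Q ^ (n.choose 2) / qPoch Q Q n with haa
  have habound : ∀ (n : ℕ) (w : ℂ), ‖a n * w ^ n‖ ≤ c⁻¹ * ‖w‖ ^ n := by
    intro n w
    rw [haa, norm_mul, norm_div, norm_pow, norm_pow]
    have h1 : ‖Q‖ ^ n.choose 2 ≤ 1 := pow_le_one₀ (norm_nonneg Q) hQ.le
    have h2 : ‖Q‖ ^ n.choose 2 / ‖qPoch Q Q n‖ ≤ 1 / c :=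
      div_le_div₀ (by norm_num) h1 hc0 (hlow n)
    have h3 : (0:ℝ) ≤ ‖w‖ ^ n := by positivity
    calc ‖Q‖ ^ n.choose 2 / ‖qPoch Q Q n‖ * ‖w‖ ^ n ≤ 1 / c * ‖w‖ ^ n :=
          mul_le_mul_of_nonneg_right h2 h3
      _ = c⁻¹ * ‖w‖ ^ n := by rw [one_div]
  have hsum : ∀ {w : ℂ}, ‖w‖ < 1 → Summable fun n => a n * w ^ n := by
    intro w hw
    refine Summable.of_norm_bounded
      ((summable_geometric_of_lt_one (norm_nonneg w) hw).mul_left c⁻¹) (fun n => habound n w)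
  set S : ℂ → ℂ := fun w => ∑' n, a n * w ^ n with hS
  have ha0 : a 0 = 1 := by simp [haa, qPoch]
  have hrec : ∀ n : ℕ, a (n + 1) = a (n + 1) * Q ^ (n + 1) + a n * Q ^ n := by
    intro n
    have hpoch : qPoch Q Q (n + 1) = qPoch Q Q n * (1 - Q * Q ^ n) := Finset.prod_range_succ _ n
    have hch : (n + 1).choose 2 = n.choose 2 + n := by
      rw [show (2:ℕ) = 1 + 1 from rfl, Nat.choose_succ_succ, Nat.choose_one_right]
      simp only [Nat.succ_eq_add_one]
      omega
    have h1 : (1 : ℂ) - Q * Q ^ n ≠ 0 := one_sub_ne_zero hQ hQ.le n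
    have h2 : qPoch Q Q n ≠ 0 := hQn n
    rw [haa]
    simp only [hpoch, hch, pow_add]
    field_simp
    have h1' : (1 - Q * Q ^ n)⁻¹ * (1 - Q * Q ^ n) = 1 := inv_mul_cancel₀ h1
    linear_combination (Q ^ n.choose 2 * Q ^ n) * h1'
  have hfe : ∀ {w : ℂ}, ‖w‖ < 1 → S w = (1 + w) * S (Q * w) := by
    intro w hw
    have hQw : ‖Q * w‖ < 1 := by
      rw [norm_mul]
      calc ‖Q‖ * ‖w‖ ≤ 1 * ‖w‖ := mul_le_mul_of_nonneg_right hQ.le (norm_nonneg w)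
        _ = ‖w‖ := one_mul _
        _ < 1 := hw
    set u : ℕ → ℂ := fun n => a n * Q ^ n * w ^ n with hu
    set v : ℕ → ℂ := fun n => a n * Q ^ n * w ^ (n + 1) with hv
    have hu' : Summable u := (hsum hQw).congr fun n => by simp only [hu]; ring
    have hv' : Summable v := ((hsum hQw).mul_right w).congr fun n => by
      simp only [hv]; ring
    have hrhs : (1 + w) * S (Q * w) = (∑' n, u n) + ∑' n, v n := by
      simp only [hS]
      have h' : ∑' n, a n * (Q * w) ^ n = ∑' n, u n :=
        tsum_congr fun n => by simp only [hu]; ring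
      rw [h', add_mul, one_mul, mul_comm]
      congr 1
      rw [← tsum_mul_right]
      exact tsum_congr fun n => by simp only [hv, hu]; ring
    rw [hrhs]
    have hlhs : S w = a 0 + ∑' n, a (n + 1) * w ^ (n + 1) := by
      simp only [hS]
      rw [Summable.tsum_eq_zero_add (hsum hw)]
      simp
    have hu2 : ∑' n, u n = u 0 + ∑' n, u (n + 1) := Summable.tsum_eq_zero_add hu'
    have hpt : ∀ n : ℕ, a (n + 1) * w ^ (n + 1) = u (n + 1) + v n := by
      intro n
      simp only [hu, hv]
      conv_lhs => rw [hrec n]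
      ring
    have hsplit : ∑' n, a (n + 1) * w ^ (n + 1) = (∑' n, u (n + 1)) + ∑' n, v n := by
      rw [← Summable.tsum_add ((summable_nat_add_iff 1).2 hu') hv']
      exact tsum_congr hpt
    rw [hlhs, hsplit]
    have : u 0 = a 0 := by simp [hu]
    rw [hu2, this]
    ring
  have hiter : ∀ N : ℕ, S z = qPoch (-z) Q N * S (Q ^ N * z) := by
    intro N
    induction N with
    | zero => simp [qPoch]
    | succ N ih =>
      have hw : ‖Q ^ N * z‖ < 1 := by
        rw [norm_mul, norm_pow]
        calc ‖Q‖ ^ N * ‖z‖ ≤ 1 * ‖z‖ :=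
              mul_le_mul_of_nonneg_right (pow_le_one₀ (norm_nonneg Q) hQ.le) (norm_nonneg z)
          _ = ‖z‖ := one_mul _
          _ < 1 := hz
      rw [ih, hfe hw]
      rw [show qPoch (-z) Q (N + 1) = qPoch (-z) Q N * (1 - -z * Q ^ N) from
        Finset.prod_range_succ _ N]
      rw [show Q * (Q ^ N * z) = Q ^ (N + 1) * z by rw [pow_succ]; ring]
      ring
  have hmz : ‖-z‖ < 1 := by rwa [norm_neg]
  have h1 : Tendsto (fun N => qPoch (-z) Q N) atTop (𝓝 (qPochInf (-z) Q)) := by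
    have hm := multipliable_one_sub hmz hQ
    exact hm.hasProd.tendsto_prod_nat
  have hTS : Tendsto (fun N => S (Q ^ N * z)) atTop (𝓝 1) := by
    have key : ∀ N : ℕ, ‖S (Q ^ N * z) - 1‖ ≤ c⁻¹ * (1 - ‖z‖)⁻¹ * ‖Q‖ ^ N := by
      intro N
      have hwz : ∀ n : ℕ, ‖(Q ^ N * z) ^ (n + 1)‖ ≤ ‖Q‖ ^ N * ‖z‖ ^ (n + 1) := by
        intro n
        rw [norm_pow, norm_mul, norm_pow, mul_pow]
        have h1 : (‖Q‖ ^ N) ^ (n + 1) ≤ ‖Q‖ ^ N :=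
          pow_le_of_le_one (by positivity) (pow_le_one₀ (norm_nonneg Q) hQ.le) n.succ_ne_zero
        exact mul_le_mul_of_nonneg_right h1 (by positivity)
      have hw : ‖Q ^ N * z‖ < 1 := by
        rw [norm_mul, norm_pow]
        calc ‖Q‖ ^ N * ‖z‖ ≤ 1 * ‖z‖ :=
              mul_le_mul_of_nonneg_right (pow_le_one₀ (norm_nonneg Q) hQ.le) (norm_nonneg z)
          _ = ‖z‖ := one_mul _
          _ < 1 := hz
      have hSw : S (Q ^ N * z) - 1 = ∑' n, a (n + 1) * (Q ^ N * z) ^ (n + 1) := by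
        simp only [hS]
        rw [Summable.tsum_eq_zero_add (hsum hw)]
        simp [ha0]
      rw [hSw]
      have hsn : Summable fun n => ‖a (n + 1) * (Q ^ N * z) ^ (n + 1)‖ := by
        refine Summable.of_nonneg_of_le (fun n => norm_nonneg _) (fun n => ?_)
          (((summable_geometric_of_lt_one (norm_nonneg _) hw).mul_left c⁻¹).mul_left ‖Q ^ N * z‖)
        calc ‖a (n + 1) * (Q ^ N * z) ^ (n + 1)‖ ≤ c⁻¹ * ‖Q ^ N * z‖ ^ (n + 1) :=
              habound (n + 1) _
          _ = ‖Q ^ N * z‖ * (c⁻¹ * ‖Q ^ N * z‖ ^ n) := by rw [pow_succ]; ring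
      calc ‖∑' n, a (n + 1) * (Q ^ N * z) ^ (n + 1)‖
          ≤ ∑' n, ‖a (n + 1) * (Q ^ N * z) ^ (n + 1)‖ := norm_tsum_le_tsum_norm hsn
        _ ≤ ∑' n : ℕ, c⁻¹ * ‖Q‖ ^ N * ‖z‖ ^ n := by
            refine Summable.tsum_le_tsum (fun n => ?_) hsn
              (((summable_geometric_of_lt_one (norm_nonneg z) hz).mul_left _))
            rw [norm_mul]
            calc ‖a (n + 1)‖ * ‖(Q ^ N * z) ^ (n + 1)‖
                ≤ ‖a (n + 1)‖ * (‖Q‖ ^ N * ‖z‖ ^ (n + 1)) :=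
                  mul_le_mul_of_nonneg_left (hwz n) (norm_nonneg _)
              _ ≤ c⁻¹ * 1 ^ (n + 1) * (‖Q‖ ^ N * ‖z‖ ^ (n + 1)) := by
                  refine mul_le_mul_of_nonneg_right ?_ (by positivity)
                  have := habound (n + 1) 1
                  simpa using this
              _ = c⁻¹ * ‖Q‖ ^ N * (‖z‖ ^ n * ‖z‖) := by rw [pow_succ]; ring
              _ ≤ c⁻¹ * ‖Q‖ ^ N * (‖z‖ ^ n * 1) := by
                  refine mul_le_mul_of_nonneg_left ?_ (by positivity)
                  exact mul_le_mul_of_nonneg_left hz.le (by positivity)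
              _ = c⁻¹ * ‖Q‖ ^ N * ‖z‖ ^ n := by ring
        _ = c⁻¹ * ‖Q‖ ^ N * (1 - ‖z‖)⁻¹ := by
            rw [tsum_mul_left, tsum_geometric_of_lt_one (norm_nonneg z) hz]
        _ = c⁻¹ * (1 - ‖z‖)⁻¹ * ‖Q‖ ^ N := by ring
    have h0 : Tendsto (fun N => S (Q ^ N * z) - 1) atTop (𝓝 0) := by
      apply squeeze_zero_norm key
      have := tendsto_pow_atTop_nhds_zero_of_lt_one (norm_nonneg Q) hQ
      simpa using this.const_mul (c⁻¹ * (1 - ‖z‖)⁻¹)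
    have := h0.add (tendsto_const_nhds (x := (1:ℂ)))
    simpa using this
  have h3 : Tendsto (fun N => qPoch (-z) Q N * S (Q ^ N * z)) atTop
      (𝓝 (qPochInf (-z) Q * 1)) := h1.mul hTS
  have h4 : (fun N : ℕ => qPoch (-z) Q N * S (Q ^ N * z)) = fun _ => S z :=
    funext fun N => (hiter N).symm
  rw [h4] at h3
  have h5 : S z = qPochInf (-z) Q * 1 := tendsto_nhds_unique tendsto_const_nhds h3
  have h6 : S z = ∑' n : ℕ, Q ^ (n.choose 2) * z ^ n / qPoch Q Q n := by
    simp only [hS]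
    exact tsum_congr fun n => by simp only [haa]; ring
  rw [← h6, h5, mul_one]


end Aux

set_option maxHeartbeats 1600000 in
theorem stmt5 (q : ℂ) (hq : ‖q‖ < 1) :
    ∑' n₁ : ℕ, ∑' n₂ : ℕ,
        q ^ (n₁ ^ 2 + 2 * n₁ * n₂ + 2 * n₂ ^ 2 + 2 * n₂) * qPoch (-q) (q ^ 2) n₂ /
          (qPoch (q ^ 2) (q ^ 2) n₁ * qPoch (q ^ 4) (q ^ 4) n₂)
      = qPochInf (-q) (q ^ 4) * qPochInf (-q ^ 3) (q ^ 4) * qPochInf (-q ^ 4) (q ^ 4) := by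
  have hq1 : ‖q‖ < 1 := hq
  have hr0 : (0:ℝ) ≤ ‖q‖ := norm_nonneg q
  have hnq : ‖-q‖ < 1 := by rwa [norm_neg]
  have hq2 : ‖q ^ 2‖ < 1 := by rw [norm_pow]; exact pow_lt_one₀ hr0 hq1 two_ne_zero
  have hq4 : ‖q ^ 4‖ < 1 := by rw [norm_pow]; exact pow_lt_one₀ hr0 hq1 (by norm_num)
  have hP2ne : ∀ m, qPoch (-q) (q ^ 2) m ≠ 0 := qPoch_ne_zero_s5 hnq hq2.le
  have hP4ne : ∀ m, qPoch (q ^ 4) (q ^ 4) m ≠ 0 := qPoch_ne_zero_s5 hq4 hq4.le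
  set C2 : ℝ := Real.exp (∑' j : ℕ, ‖Complex.log (1 - (-q) * (q ^ 2) ^ j)‖) with hC2
  set c1 : ℝ := Real.exp (-(∑' j : ℕ, ‖Complex.log (1 - q ^ 2 * (q ^ 2) ^ j)‖)) with hc1
  set c4 : ℝ := Real.exp (-(∑' j : ℕ, ‖Complex.log (1 - q ^ 4 * (q ^ 4) ^ j)‖)) with hc4
  have hC2pos : 0 < C2 := Real.exp_pos _
  have hc1pos : 0 < c1 := Real.exp_pos _
  have hc4pos : 0 < c4 := Real.exp_pos _
  have hbound : ∀ p : ℕ × ℕ,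
      ‖q ^ (p.1 ^ 2 + 2 * p.1 * p.2 + 2 * p.2 ^ 2 + 2 * p.2) * qPoch (-q) (q ^ 2) p.2 /
          (qPoch (q ^ 2) (q ^ 2) p.1 * qPoch (q ^ 4) (q ^ 4) p.2)‖
        ≤ C2 / (c1 * c4) * (‖q‖ ^ p.1 * ‖q‖ ^ p.2) := by
    intro p
    have hle : p.1 + p.2 ≤ p.1 ^ 2 + 2 * p.1 * p.2 + 2 * p.2 ^ 2 + 2 * p.2 := by nlinarith
    have hpow : ‖q‖ ^ (p.1 ^ 2 + 2 * p.1 * p.2 + 2 * p.2 ^ 2 + 2 * p.2) ≤ ‖q‖ ^ (p.1 + p.2) :=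
      pow_le_pow_of_le_one hr0 hq1.le hle
    calc ‖q ^ (p.1 ^ 2 + 2 * p.1 * p.2 + 2 * p.2 ^ 2 + 2 * p.2) * qPoch (-q) (q ^ 2) p.2 /
            (qPoch (q ^ 2) (q ^ 2) p.1 * qPoch (q ^ 4) (q ^ 4) p.2)‖
        = ‖q‖ ^ (p.1 ^ 2 + 2 * p.1 * p.2 + 2 * p.2 ^ 2 + 2 * p.2) * ‖qPoch (-q) (q ^ 2) p.2‖ /
            (‖qPoch (q ^ 2) (q ^ 2) p.1‖ * ‖qPoch (q ^ 4) (q ^ 4) p.2‖) := by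
          rw [norm_div, norm_mul, norm_mul, norm_pow]
      _ ≤ ‖q‖ ^ (p.1 + p.2) * C2 / (c1 * c4) := by
          refine div_le_div₀ (by positivity) ?_ (by positivity) ?_
          · exact mul_le_mul hpow (qPoch_norm_upper hnq hq2 p.2) (norm_nonneg _) (by positivity)
          · exact mul_le_mul (qPoch_norm_lower_s5 hq2 hq2 p.1) (qPoch_norm_lower_s5 hq4 hq4 p.2)
              hc4pos.le (norm_nonneg _)
      _ = C2 / (c1 * c4) * (‖q‖ ^ p.1 * ‖q‖ ^ p.2) := by rw [pow_add]; ring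
  have hgn : Summable fun n : ℕ => ‖(‖q‖ ^ n : ℝ)‖ := by
    simpa [Real.norm_eq_abs, abs_of_nonneg (pow_nonneg hr0 _)]
      using summable_geometric_of_lt_one hr0 hq1
  have hgeom2 : Summable fun p : ℕ × ℕ => ‖q‖ ^ p.1 * ‖q‖ ^ p.2 :=
    summable_mul_of_summable_norm hgn hgn
  have hsumF : Summable (Function.uncurry fun n₁ n₂ : ℕ =>
      q ^ (n₁ ^ 2 + 2 * n₁ * n₂ + 2 * n₂ ^ 2 + 2 * n₂) * qPoch (-q) (q ^ 2) n₂ /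
        (qPoch (q ^ 2) (q ^ 2) n₁ * qPoch (q ^ 4) (q ^ 4) n₂)) :=
    Summable.of_norm_bounded (hgeom2.mul_left _) hbound
  have swap := (Summable.tsum_comm (f := fun n₁ n₂ : ℕ =>
      q ^ (n₁ ^ 2 + 2 * n₁ * n₂ + 2 * n₂ ^ 2 + 2 * n₂) * qPoch (-q) (q ^ 2) n₂ /
        (qPoch (q ^ 2) (q ^ 2) n₁ * qPoch (q ^ 4) (q ^ 4) n₂)) hsumF).symm
  rw [swap]
  have inner : ∀ m : ℕ, (∑' n : ℕ,
      q ^ (n ^ 2 + 2 * n * m + 2 * m ^ 2 + 2 * m) * qPoch (-q) (q ^ 2) m /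
        (qPoch (q ^ 2) (q ^ 2) n * qPoch (q ^ 4) (q ^ 4) m))
      = qPochInf (-q) (q ^ 2) *
        ((q ^ 4) ^ (m.choose 2) * (q ^ 4) ^ m / qPoch (q ^ 4) (q ^ 4) m) := by
    intro m
    have hzm : ‖q ^ (2 * m + 1)‖ < 1 := by
      rw [norm_pow]; exact pow_lt_one₀ hr0 hq1 (by omega)
    have step1 : ∀ n : ℕ,
        q ^ (n ^ 2 + 2 * n * m + 2 * m ^ 2 + 2 * m) * qPoch (-q) (q ^ 2) m /
          (qPoch (q ^ 2) (q ^ 2) n * qPoch (q ^ 4) (q ^ 4) m)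
        = (q ^ (2 * m ^ 2 + 2 * m) * qPoch (-q) (q ^ 2) m / qPoch (q ^ 4) (q ^ 4) m) *
          ((q ^ 2) ^ (n.choose 2) * (q ^ (2 * m + 1)) ^ n / qPoch (q ^ 2) (q ^ 2) n) := by
      intro n
      have h := two_mul_choose_two n
      have hsplit : n ^ 2 + 2 * n * m + 2 * m ^ 2 + 2 * m
          = (2 * m ^ 2 + 2 * m) + (2 * (n.choose 2) + (2 * m + 1) * n) := by nlinarith
      rw [show q ^ (n ^ 2 + 2 * n * m + 2 * m ^ 2 + 2 * m)
          = q ^ (2 * m ^ 2 + 2 * m) * ((q ^ 2) ^ (n.choose 2) * (q ^ (2 * m + 1)) ^ n) by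
        rw [hsplit]; ring]
      simp only [div_eq_mul_inv, mul_inv]
      ring
    calc (∑' n : ℕ, q ^ (n ^ 2 + 2 * n * m + 2 * m ^ 2 + 2 * m) * qPoch (-q) (q ^ 2) m /
            (qPoch (q ^ 2) (q ^ 2) n * qPoch (q ^ 4) (q ^ 4) m))
        = ∑' n : ℕ, (q ^ (2 * m ^ 2 + 2 * m) * qPoch (-q) (q ^ 2) m / qPoch (q ^ 4) (q ^ 4) m) *
            ((q ^ 2) ^ (n.choose 2) * (q ^ (2 * m + 1)) ^ n / qPoch (q ^ 2) (q ^ 2) n) :=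
          tsum_congr step1
      _ = (q ^ (2 * m ^ 2 + 2 * m) * qPoch (-q) (q ^ 2) m / qPoch (q ^ 4) (q ^ 4) m) *
          ∑' n : ℕ, ((q ^ 2) ^ (n.choose 2) * (q ^ (2 * m + 1)) ^ n / qPoch (q ^ 2) (q ^ 2) n) :=
          tsum_mul_left
      _ = (q ^ (2 * m ^ 2 + 2 * m) * qPoch (-q) (q ^ 2) m / qPoch (q ^ 4) (q ^ 4) m) *
          qPochInf (-(q ^ (2 * m + 1))) (q ^ 2) := by rw [euler hq2 hzm]
      _ = qPochInf (-q) (q ^ 2) *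
          ((q ^ 4) ^ (m.choose 2) * (q ^ 4) ^ m / qPoch (q ^ 4) (q ^ 4) m) := by
          have hsplit2 := qPochInf_split hnq hq2 m
          have harg : (-q) * (q ^ 2) ^ m = -(q ^ (2 * m + 1)) := by
            rw [← pow_mul]; ring
          rw [harg] at hsplit2
          have hval : qPochInf (-(q ^ (2 * m + 1))) (q ^ 2)
              = qPochInf (-q) (q ^ 2) / qPoch (-q) (q ^ 2) m := by
            rw [eq_div_iff (hP2ne m)]
            linear_combination -hsplit2
          rw [hval]
          have hm := two_mul_choose_two m
          have hexp : 2 * m ^ 2 + 2 * m = 4 * (m.choose 2) + 4 * m := by nlinarith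
          rw [show q ^ (2 * m ^ 2 + 2 * m) = (q ^ 4) ^ (m.choose 2) * (q ^ 4) ^ m by
            rw [hexp]; ring]
          field_simp [hP2ne m, hP4ne m]
  rw [tsum_congr inner, tsum_mul_left, euler hq4 hq4, qPochInf_even_odd hnq hq2,
    show ((q ^ 2) ^ 2 : ℂ) = q ^ 4 by ring, show (-q) * q ^ 2 = -q ^ 3 by ring]
end

section
/- For |q|<1 and complex z, ω, the identity ∑_{n₁,n₂≥0} z^{n₁} ω^{n₂} q^{n₁² + 2n₁n₂ + 2n₂² } (-zq;q²)_{n₂} / ((q²;q²)_{n₁} (q⁴;q⁴)_{n₂}) = (-zq;q⁴)_∞ (-zq³;q⁴)_∞ (-ωq²;q⁴)_∞ holds. -/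
open scoped BigOperators

open Filter Topology Finset

set_option maxHeartbeats 1000000

namespace QAux

lemma hasProd_zero_of_zero {f : ℕ → ℂ} {b : ℕ} (h : f b = 0) : HasProd f 0 := by
  have hev : ∀ᶠ s in (atTop : Filter (Finset ℕ)), (0 : ℂ) = ∏ i ∈ s, f i := by
    filter_upwards [Filter.eventually_ge_atTop {b}] with s hs
    exact (Finset.prod_eq_zero (by simpa using hs) h).symm
  exact Filter.Tendsto.congr' hev tendsto_const_nhds

lemma summable_clog {u : ℕ → ℂ} (hu : Summable fun j => ‖u j‖) (hne : ∀ j, 1 + u j ≠ 0) :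
    Summable fun j => Complex.log (1 + u j) := by
  have h0 : Tendsto (fun j => ‖u j‖) atTop (𝓝 0) := hu.tendsto_atTop_zero
  apply Summable.of_norm_bounded_eventually_nat (hu.mul_left (3/2))
  filter_upwards [h0.eventually_le_const (show (0:ℝ) < 1/2 by norm_num)] with j hj
  exact Complex.norm_log_one_add_half_le_self hj

lemma multipliable_one_add {u : ℕ → ℂ} (hu : Summable fun j => ‖u j‖) :
    Multipliable fun j => 1 + u j := by
  by_cases h : ∀ j, 1 + u j ≠ 0
  · exact Complex.multipliable_of_summable_log (summable_clog hu h)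
  · push_neg at h
    obtain ⟨b, hb⟩ := h
    exact ⟨0, hasProd_zero_of_zero hb⟩

lemma summable_norm_aq (a q : ℂ) (hq : ‖q‖ < 1) : Summable fun j : ℕ => ‖a * q ^ j‖ := by
  have := (summable_geometric_of_lt_one (norm_nonneg q) hq).mul_left ‖a‖
  simpa [norm_mul, norm_pow] using this

lemma multipliable_qp (a q : ℂ) (hq : ‖q‖ < 1) : Multipliable fun j : ℕ => 1 - a * q ^ j := by
  have h := multipliable_one_add (u := fun j => -(a * q ^ j))
    (by simpa using summable_norm_aq a q hq)
  exact h.congr fun j => by ring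

lemma tendsto_qPoch (a q : ℂ) (hq : ‖q‖ < 1) :
    Tendsto (fun N => qPoch a q N) atTop (𝓝 (qPochInf a q)) :=
  (multipliable_qp a q hq).hasProd.tendsto_prod_nat

lemma norm_qPoch_le (a q : ℂ) (hq : ‖q‖ < 1) (n : ℕ) :
    ‖qPoch a q n‖ ≤ Real.exp (‖a‖ * (1 - ‖q‖)⁻¹) := by
  have h1 : ‖qPoch a q n‖ = ∏ j ∈ Finset.range n, ‖1 - a * q ^ j‖ := by
    rw [qPoch, norm_prod]
  rw [h1]
  calc ∏ j ∈ Finset.range n, ‖1 - a * q ^ j‖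
      ≤ ∏ j ∈ Finset.range n, Real.exp (‖a‖ * ‖q‖ ^ j) := by
        apply Finset.prod_le_prod (fun j _ => norm_nonneg _)
        intro j _
        calc ‖1 - a * q ^ j‖ ≤ ‖(1:ℂ)‖ + ‖a * q ^ j‖ := norm_sub_le _ _
          _ = ‖a‖ * ‖q‖ ^ j + 1 := by rw [norm_one, norm_mul, norm_pow]; ring
          _ ≤ Real.exp (‖a‖ * ‖q‖ ^ j) := Real.add_one_le_exp _
    _ = Real.exp (∑ j ∈ Finset.range n, ‖a‖ * ‖q‖ ^ j) := (Real.exp_sum _ _).symm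
    _ ≤ Real.exp (‖a‖ * (1 - ‖q‖)⁻¹) := by
        apply Real.exp_le_exp.2
        rw [← Finset.mul_sum]
        apply mul_le_mul_of_nonneg_left _ (norm_nonneg a)
        rw [← tsum_geometric_of_lt_one (norm_nonneg q) hq]
        exact Summable.sum_le_tsum _ (fun i _ => by positivity)
          (summable_geometric_of_lt_one (norm_nonneg q) hq)

/-- Lower bound constant for `(p;p)_n`. -/
noncomputable def cLB (p : ℂ) : ℝ := Real.exp (∑' j : ℕ, Real.log (1 - ‖p‖ ^ (j + 1)))

lemma cLB_pos (p : ℂ) : 0 < cLB p := Real.exp_pos _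

lemma pow_succ_lt_one {p : ℂ} (hp : ‖p‖ < 1) (j : ℕ) : ‖p‖ ^ (j + 1) < 1 :=
  pow_lt_one₀ (norm_nonneg p) hp (Nat.succ_ne_zero j)

lemma summable_rlog (p : ℂ) (hp : ‖p‖ < 1) :
    Summable fun j : ℕ => Real.log (1 - ‖p‖ ^ (j + 1)) := by
  have hgeo : Summable fun j : ℕ => 2 * ‖p‖ ^ (j + 1) :=
    (summable_nat_add_iff (f := fun j : ℕ => 2 * ‖p‖ ^ j) 1).2
      ((summable_geometric_of_lt_one (norm_nonneg p) hp).mul_left 2)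
  apply Summable.of_norm_bounded_eventually_nat hgeo
  have h0 : Tendsto (fun j : ℕ => ‖p‖ ^ (j + 1)) atTop (𝓝 0) := by
    have := tendsto_pow_atTop_nhds_zero_of_lt_one (norm_nonneg p) hp
    exact this.comp (tendsto_add_atTop_nat 1)
  filter_upwards [h0.eventually_le_const (show (0:ℝ) < 1/2 by norm_num)] with j hj
  set x := ‖p‖ ^ (j + 1) with hx
  have hx0 : 0 ≤ x := by positivity
  have h1 : 0 < 1 - x := by linarith
  have hlog_np : Real.log (1 - x) ≤ 0 := Real.log_nonpos (by linarith) (by linarith)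
  rw [Real.norm_eq_abs, abs_of_nonpos hlog_np]
  have h2 : -Real.log (1 - x) = Real.log (1 - x)⁻¹ := (Real.log_inv _).symm
  have h3 : Real.log (1 - x)⁻¹ ≤ (1 - x)⁻¹ - 1 :=
    Real.log_le_sub_one_of_pos (by positivity)
  have h5 : (1 - x)⁻¹ ≤ 2 := by
    have h51 : (1:ℝ)/2 ≤ 1 - x := by linarith
    calc (1 - x)⁻¹ ≤ ((1:ℝ)/2)⁻¹ := inv_anti₀ (by norm_num) h51
      _ = 2 := by norm_num
  have h6 : (1 - x)⁻¹ - 1 = x * (1 - x)⁻¹ := by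
    field_simp
    ring
  have h7 : x * (1 - x)⁻¹ ≤ x * 2 := mul_le_mul_of_nonneg_left h5 hx0
  rw [h2]
  calc Real.log (1 - x)⁻¹ ≤ (1 - x)⁻¹ - 1 := h3
    _ = x * (1 - x)⁻¹ := h6
    _ ≤ x * 2 := h7
    _ = 2 * x := by ring

lemma cLB_le (p : ℂ) (hp : ‖p‖ < 1) (n : ℕ) : cLB p ≤ ‖qPoch p p n‖ := by
  have hpos : ∀ j : ℕ, 0 < 1 - ‖p‖ ^ (j + 1) := fun j => by
    have := pow_succ_lt_one hp j; linarith
  have h1 : ‖qPoch p p n‖ = ∏ j ∈ Finset.range n, ‖1 - p * p ^ j‖ := by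
    rw [qPoch, norm_prod]
  have h2 : ∀ j : ℕ, (1 - ‖p‖ ^ (j + 1)) ≤ ‖1 - p * p ^ j‖ := fun j => by
    have : ‖p * p ^ j‖ = ‖p‖ ^ (j + 1) := by
      rw [norm_mul, norm_pow, pow_succ]; ring
    calc 1 - ‖p‖ ^ (j + 1) = ‖(1:ℂ)‖ - ‖p * p ^ j‖ := by rw [norm_one, this]
      _ ≤ ‖1 - p * p ^ j‖ := norm_sub_norm_le _ _
  have hs := summable_rlog p hp
  calc cLB p = Real.exp (∑' j : ℕ, Real.log (1 - ‖p‖ ^ (j + 1))) := rfl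
    _ ≤ Real.exp (∑ j ∈ Finset.range n, Real.log (1 - ‖p‖ ^ (j + 1))) := by
        apply Real.exp_le_exp.2
        have hsplit := Summable.sum_add_tsum_nat_add n hs
        have htail : ∑' i : ℕ, Real.log (1 - ‖p‖ ^ (i + n + 1)) ≤ 0 := by
          rw [← neg_nonneg, ← tsum_neg]
          exact tsum_nonneg fun i => by
            have h0 : (0:ℝ) ≤ ‖p‖ ^ (i + n + 1) := by positivity
            have := Real.log_nonpos (le_of_lt (hpos (i + n))) (by linarith)
            linarith
        linarith [hsplit]
    _ = ∏ j ∈ Finset.range n, (1 - ‖p‖ ^ (j + 1)) := by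
        rw [Real.exp_sum]
        exact Finset.prod_congr rfl fun j _ => Real.exp_log (hpos j)
    _ ≤ ∏ j ∈ Finset.range n, ‖1 - p * p ^ j‖ :=
        Finset.prod_le_prod (fun j _ => (hpos j).le) (fun j _ => h2 j)
    _ = ‖qPoch p p n‖ := h1.symm

lemma qPoch_ne_zero (p : ℂ) (hp : ‖p‖ < 1) (n : ℕ) : qPoch p p n ≠ 0 := by
  intro h
  have := cLB_le p hp n
  rw [h, norm_zero] at this
  exact absurd this (not_le.2 (cLB_pos p))

lemma qPochInf_ne_zero (p : ℂ) (hp : ‖p‖ < 1) : qPochInf p p ≠ 0 := by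
  have h := (tendsto_qPoch p p hp).norm
  have hle : cLB p ≤ ‖qPochInf p p‖ :=
    ge_of_tendsto h (Filter.Eventually.of_forall (cLB_le p hp))
  intro h0
  rw [h0, norm_zero] at hle
  exact absurd hle (not_le.2 (cLB_pos p))

lemma qPoch_succ (a q : ℂ) (n : ℕ) : qPoch a q (n + 1) = qPoch a q n * (1 - a * q ^ n) :=
  Finset.prod_range_succ _ n

lemma choose_two_succ (n : ℕ) : (n + 1).choose 2 = n.choose 2 + n := by
  show n.choose 1 + n.choose 2 = n.choose 2 + n
  rw [Nat.choose_one_right]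
  omega

lemma pascal (p : ℂ) (hne : ∀ n, qPoch p p n ≠ 0) (i m : ℕ) :
    qPoch p p (i + m + 2) / (qPoch p p (i + 1) * qPoch p p (m + 1))
      = qPoch p p (i + m + 1) / (qPoch p p (i + 1) * qPoch p p m)
        + p ^ (m + 1) * (qPoch p p (i + m + 1) / (qPoch p p i * qPoch p p (m + 1))) := by
  have h2 : qPoch p p (i + m + 2) = qPoch p p (i + m + 1) * (1 - p * p ^ (i + m + 1)) :=
    qPoch_succ p p (i + m + 1)
  have hi : qPoch p p (i + 1) = qPoch p p i * (1 - p * p ^ i) := qPoch_succ p p i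
  have hm : qPoch p p (m + 1) = qPoch p p m * (1 - p * p ^ m) := qPoch_succ p p m
  have hiz : qPoch p p i ≠ 0 := hne i
  have hmz : qPoch p p m ≠ 0 := hne m
  have hi1 : (1 - p * p ^ i) ≠ 0 := by
    have := hne (i + 1); rw [hi] at this; exact right_ne_zero_of_mul this
  have hm1 : (1 - p * p ^ m) ≠ 0 := by
    have := hne (m + 1); rw [hm] at this; exact right_ne_zero_of_mul this
  rw [h2, hi, hm]
  field_simp
  ring

lemma finite_qbinom (p t : ℂ) (hne : ∀ n, qPoch p p n ≠ 0) (N : ℕ) :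
    ∏ j ∈ Finset.range N, (1 + t * p ^ j)
      = ∑ n ∈ Finset.range (N + 1), p ^ n.choose 2 * t ^ n *
          (qPoch p p N / (qPoch p p n * qPoch p p (N - n))) := by
  induction N with
  | zero => simp [qPoch]
  | succ N ih =>
    set G : ℕ → ℕ → ℂ := fun M n => qPoch p p M / (qPoch p p n * qPoch p p (M - n)) with hG
    have hG0 : ∀ M : ℕ, G M 0 = 1 := by
      intro M
      simp only [hG]
      rw [show qPoch p p 0 = 1 by simp [qPoch], Nat.sub_zero, one_mul, div_self (hne M)]
    have hGdiag : ∀ M : ℕ, G M M = 1 := by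
      intro M
      simp only [hG]
      rw [Nat.sub_self, show qPoch p p 0 = 1 by simp [qPoch], mul_one, div_self (hne M)]
    rw [Finset.prod_range_succ, ih]
    -- LHS = (∑_{n ≤ N} e n G N n) * (1 + t p^N)
    have expand : (∑ n ∈ Finset.range (N + 1), p ^ n.choose 2 * t ^ n * G N n) * (1 + t * p ^ N)
        = (∑ n ∈ Finset.range (N + 1), p ^ n.choose 2 * t ^ n * G N n)
          + ∑ n ∈ Finset.range (N + 1), (t * p ^ N) * (p ^ n.choose 2 * t ^ n * G N n) := by
      rw [mul_add, mul_one, Finset.sum_mul]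
      congr 1
      exact Finset.sum_congr rfl fun n _ => by ring
    rw [expand]
    -- second sum termwise: (t p^N) e n G N n = e (n+1) * p^(N-n) * G N n  for n ≤ N
    have hsecond : ∑ n ∈ Finset.range (N + 1), (t * p ^ N) * (p ^ n.choose 2 * t ^ n * G N n)
        = ∑ n ∈ Finset.range (N + 1),
            p ^ (n + 1).choose 2 * t ^ (n + 1) * (p ^ (N - n) * G N n) := by
      apply Finset.sum_congr rfl
      intro n hn
      have hnN : n ≤ N := Nat.lt_succ_iff.1 (Finset.mem_range.1 hn)
      have hpow : p ^ N = p ^ n * p ^ (N - n) := by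
        rw [← pow_add]; congr 1; omega
      rw [choose_two_succ, pow_add, hpow, pow_succ]
      ring
    rw [hsecond]
    -- split RHS with sum_range_succ'
    rw [Finset.sum_range_succ' (fun n => p ^ n.choose 2 * t ^ n * G (N + 1) n) (N + 1)]
    -- split first sum on the left with sum_range_succ'
    rw [Finset.sum_range_succ' (fun n => p ^ n.choose 2 * t ^ n * G N n) N]
    -- split last terms
    rw [Finset.sum_range_succ (fun n => p ^ (n + 1).choose 2 * t ^ (n + 1) * (p ^ (N - n) * G N n)) N]
    rw [Finset.sum_range_succ (fun i => p ^ (i + 1).choose 2 * t ^ (i + 1) * G (N + 1) (i + 1)) N]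
    have hdiag : p ^ (N + 1).choose 2 * t ^ (N + 1) * G (N + 1) (N + 1)
        = p ^ (N + 1).choose 2 * t ^ (N + 1) * (p ^ (N - N) * G N N) := by
      rw [hGdiag, hGdiag, Nat.sub_self, pow_zero]; ring
    have hzero : (p:ℂ) ^ (0:ℕ).choose 2 * t ^ (0:ℕ) * G (N + 1) 0
        = p ^ (0:ℕ).choose 2 * t ^ (0:ℕ) * G N 0 := by
      rw [hG0, hG0]
    have hmain : ∀ i ∈ Finset.range N,
        p ^ (i + 1).choose 2 * t ^ (i + 1) * G (N + 1) (i + 1)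
          = p ^ (i + 1).choose 2 * t ^ (i + 1) * G N (i + 1)
            + p ^ (i + 1).choose 2 * t ^ (i + 1) * (p ^ (N - i) * G N i) := by
      intro i hi
      have hiN : i < N := Finset.mem_range.1 hi
      obtain ⟨m, hm⟩ : ∃ m, N = i + m + 1 := ⟨N - i - 1, by omega⟩
      subst hm
      have hP := pascal p hne i m
      simp only [hG]
      have h1 : i + m + 1 + 1 - (i + 1) = m + 1 := by omega
      have h2 : i + m + 1 - (i + 1) = m := by omega
      have h3 : i + m + 1 - i = m + 1 := by omega
      rw [h1, h2, h3]
      rw [show i + m + 1 + 1 = i + m + 2 by omega, hP]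
      ring
    rw [Finset.sum_congr rfl hmain]
    rw [Finset.sum_add_distrib, hdiag, hzero]
    ring

/-- Mini ratio test helper. -/
lemma summable_of_ratio {a : ℕ → ℝ} (h0 : ∀ k, 0 ≤ a k) {r : ℕ → ℝ}
    (hr : Tendsto r atTop (𝓝 0)) (hrpos : ∀ k, 0 ≤ r k)
    (hrec : ∀ k, a (k + 1) = r k * a k) : Summable a := by
  apply summable_of_ratio_norm_eventually_le (r := 1/2) (by norm_num)
  filter_upwards [hr.eventually_le_const (show (0:ℝ) < 1/2 by norm_num)] with k hk
  rw [Real.norm_eq_abs, Real.norm_eq_abs, abs_of_nonneg (h0 (k+1)), abs_of_nonneg (h0 k), hrec k]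
  exact mul_le_mul_of_nonneg_right hk (h0 k)

lemma euler (p t : ℂ) (hp : ‖p‖ < 1) :
    ∑' n : ℕ, p ^ n.choose 2 * t ^ n / qPoch p p n = qPochInf (-t) p := by
  classical
  have hne := qPoch_ne_zero p hp
  set B := Real.exp (‖p‖ * (1 - ‖p‖)⁻¹) with hB
  set c := cLB p with hc
  have hcpos : 0 < c := cLB_pos p
  set bound : ℕ → ℝ := fun k => B * (c⁻¹ * c⁻¹) * (‖p‖ ^ k.choose 2 * ‖t‖ ^ k) with hbd
  have hbound_sum : Summable bound := by
    apply Summable.mul_left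
    apply summable_of_ratio (a := fun k => ‖p‖ ^ k.choose 2 * ‖t‖ ^ k)
      (fun k => by positivity) (r := fun k => ‖t‖ * ‖p‖ ^ k)
    · have := (tendsto_pow_atTop_nhds_zero_of_lt_one (norm_nonneg p) hp).const_mul ‖t‖
      simpa using this
    · intro k; positivity
    · intro k
      rw [choose_two_succ, pow_add, pow_succ]
      ring
  set g : ℕ → ℂ := fun k => p ^ k.choose 2 * t ^ k / qPoch p p k with hg
  set f : ℕ → ℕ → ℂ := fun N k => if k < N + 1 then
      p ^ k.choose 2 * t ^ k * (qPoch p p N / (qPoch p p k * qPoch p p (N - k))) else 0 with hf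
  have hfs : ∀ N, ∑' k, f N k = ∏ j ∈ Finset.range N, (1 + t * p ^ j) := by
    intro N
    rw [tsum_eq_sum (s := Finset.range (N + 1))
      (fun k hk => by
        simp only [hf]
        rw [if_neg (by simpa using fun h => hk (Finset.mem_range.2 h))])]
    rw [finite_qbinom p t hne N]
    exact Finset.sum_congr rfl fun k hk => by
      simp only [hf]; rw [if_pos (Finset.mem_range.1 hk)]
  have hlim : ∀ k, Tendsto (fun N => f N k) atTop (𝓝 (g k)) := by
    intro k
    have h1 : Tendsto (fun N => qPoch p p N) atTop (𝓝 (qPochInf p p)) := tendsto_qPoch p p hp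
    have h2 : Tendsto (fun N => qPoch p p (N - k)) atTop (𝓝 (qPochInf p p)) :=
      h1.comp (tendsto_sub_atTop_nat k)
    have hPne : qPochInf p p ≠ 0 := qPochInf_ne_zero p hp
    have hden : qPoch p p k * qPochInf p p ≠ 0 := mul_ne_zero (hne k) hPne
    have h3 : Tendsto
        (fun N => p ^ k.choose 2 * t ^ k * (qPoch p p N / (qPoch p p k * qPoch p p (N - k))))
        atTop (𝓝 (p ^ k.choose 2 * t ^ k * (qPochInf p p / (qPoch p p k * qPochInf p p)))) :=
      tendsto_const_nhds.mul (h1.div (tendsto_const_nhds.mul h2) hden)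
    have heq : p ^ k.choose 2 * t ^ k * (qPochInf p p / (qPoch p p k * qPochInf p p)) = g k := by
      simp only [hg]
      rw [mul_comm (qPoch p p k) (qPochInf p p), mul_div_assoc,
        div_mul_cancel_left₀ hPne, ← div_eq_mul_inv, mul_div_assoc]
    rw [← heq]
    apply Tendsto.congr' _ h3
    filter_upwards [eventually_ge_atTop k] with N hN
    simp only [hf]
    rw [if_pos (by omega)]
  have hb : ∀ N, ∀ k, ‖f N k‖ ≤ bound k := by
    intro N k
    by_cases hk : k < N + 1
    · simp only [hf]
      rw [if_pos hk, norm_mul, norm_mul, norm_div, norm_mul, norm_pow, norm_pow]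
      have hq1 : ‖qPoch p p N‖ ≤ B := norm_qPoch_le p p hp N
      have hq2 : c ≤ ‖qPoch p p k‖ := cLB_le p hp k
      have hq3 : c ≤ ‖qPoch p p (N - k)‖ := cLB_le p hp (N - k)
      have hquot : ‖qPoch p p N‖ / (‖qPoch p p k‖ * ‖qPoch p p (N - k)‖) ≤ B / (c * c) := by
        apply div_le_div₀ (le_trans (norm_nonneg _) hq1) hq1 (by positivity)
        exact mul_le_mul hq2 hq3 hcpos.le (norm_nonneg _)
      have hBc : B / (c * c) = B * (c⁻¹ * c⁻¹) := by
        field_simp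
      calc ‖p‖ ^ k.choose 2 * ‖t‖ ^ k * (‖qPoch p p N‖ / (‖qPoch p p k‖ * ‖qPoch p p (N - k)‖))
          ≤ ‖p‖ ^ k.choose 2 * ‖t‖ ^ k * (B * (c⁻¹ * c⁻¹)) := by
            apply mul_le_mul_of_nonneg_left _ (by positivity)
            rw [← hBc]; exact hquot
        _ = bound k := by simp only [hbd]; ring
    · simp only [hf]
      rw [if_neg hk, norm_zero]
      simp only [hbd]
      positivity
  have key : Tendsto (fun N => ∑' k, f N k) atTop (𝓝 (∑' k, g k)) :=
    tendsto_tsum_of_dominated_convergence hbound_sum hlim (Filter.Eventually.of_forall hb)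
  have key2 : Tendsto (fun N => ∏ j ∈ Finset.range N, (1 + t * p ^ j)) atTop (𝓝 (∑' k, g k)) :=
    key.congr hfs
  have key3 : Tendsto (fun N => ∏ j ∈ Finset.range N, (1 + t * p ^ j)) atTop
      (𝓝 (qPochInf (-t) p)) := by
    have h := (multipliable_qp (-t) p hp).hasProd.tendsto_prod_nat
    apply h.congr
    intro N
    exact Finset.prod_congr rfl fun j _ => by ring
  exact tendsto_nhds_unique key2 key3

lemma two_choose (n : ℕ) : 2 * n.choose 2 + n = n ^ 2 := by
  induction n with
  | zero => simp
  | succ n ih =>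
    rw [choose_two_succ]
    have h : (n + 1) ^ 2 = n ^ 2 + 2 * n + 1 := by ring
    rw [h, ← ih]
    ring

end QAux

open QAux

theorem stmt7 (q z ω : ℂ) (hq : ‖q‖ < 1) :
    ∑' n₁ : ℕ, ∑' n₂ : ℕ,
        z ^ n₁ * ω ^ n₂ * q ^ (n₁ ^ 2 + 2 * n₁ * n₂ + 2 * n₂ ^ 2) *
          qPoch (-(z * q)) (q ^ 2) n₂ /
            (qPoch (q ^ 2) (q ^ 2) n₁ * qPoch (q ^ 4) (q ^ 4) n₂)
      = qPochInf (-(z * q)) (q ^ 4) * qPochInf (-(z * q ^ 3)) (q ^ 4) *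
          qPochInf (-(ω * q ^ 2)) (q ^ 4) := by
  have hq' : ‖q‖ < 1 := hq
  have hq2 : ‖q ^ 2‖ < 1 := by
    rw [norm_pow]; exact pow_lt_one₀ (norm_nonneg q) hq' two_ne_zero
  have hq4 : ‖q ^ 4‖ < 1 := by
    rw [norm_pow]; exact pow_lt_one₀ (norm_nonneg q) hq' (by norm_num)
  set F : ℕ → ℕ → ℂ := fun n₁ n₂ =>
    z ^ n₁ * ω ^ n₂ * q ^ (n₁ ^ 2 + 2 * n₁ * n₂ + 2 * n₂ ^ 2) * qPoch (-(z * q)) (q ^ 2) n₂ /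
      (qPoch (q ^ 2) (q ^ 2) n₁ * qPoch (q ^ 4) (q ^ 4) n₂) with hF
  -- summability of the double series
  set u : ℕ → ℝ := fun n => ‖z‖ ^ n * ‖q‖ ^ (n ^ 2) with hu_def
  set v : ℕ → ℝ := fun n => ‖ω‖ ^ n * ‖q‖ ^ (2 * n ^ 2) with hv_def
  have hqq2 : (‖q‖ : ℝ) ^ 2 < 1 := pow_lt_one₀ (norm_nonneg q) hq' two_ne_zero
  have hqq4 : (‖q‖ : ℝ) ^ 4 < 1 := pow_lt_one₀ (norm_nonneg q) hq' (by norm_num)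
  have hu : Summable u := by
    apply summable_of_ratio (fun k => by simp only [hu_def]; positivity)
      (r := fun k => (‖z‖ * ‖q‖) * ((‖q‖ ^ 2) ^ k))
    · have := (tendsto_pow_atTop_nhds_zero_of_lt_one (by positivity) hqq2).const_mul (‖z‖ * ‖q‖)
      simpa using this
    · intro k; positivity
    · intro k
      simp only [hu_def]
      rw [show (k + 1) ^ 2 = k ^ 2 + 2 * k + 1 by ring]
      rw [pow_add, pow_add, pow_succ, ← pow_mul]
      ring
  have hv : Summable v := by
    apply summable_of_ratio (fun k => by simp only [hv_def]; positivity)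
      (r := fun k => (‖ω‖ * ‖q‖ ^ 2) * ((‖q‖ ^ 4) ^ k))
    · have := (tendsto_pow_atTop_nhds_zero_of_lt_one (by positivity) hqq4).const_mul (‖ω‖ * ‖q‖ ^ 2)
      simpa using this
    · intro k; positivity
    · intro k
      simp only [hv_def]
      rw [show 2 * (k + 1) ^ 2 = 2 * k ^ 2 + 4 * k + 2 by ring]
      rw [pow_add, pow_add, pow_succ, ← pow_mul]
      ring
  set B₂ : ℝ := Real.exp (‖-(z * q)‖ * (1 - ‖q ^ 2‖)⁻¹) with hB₂
  set c₂ : ℝ := cLB (q ^ 2) with hc₂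
  set c₄ : ℝ := cLB (q ^ 4) with hc₄
  have hc₂pos : 0 < c₂ := cLB_pos _
  have hc₄pos : 0 < c₄ := cLB_pos _
  have hB₂pos : 0 < B₂ := Real.exp_pos _
  have Hsum : Summable (Function.uncurry F) := by
    apply Summable.of_norm_bounded
      (((hu.mul_of_nonneg hv (fun k => by simp only [hu_def]; positivity)
        (fun k => by simp only [hv_def]; positivity))).mul_left (B₂ * (c₂⁻¹ * c₄⁻¹)))
    rintro ⟨n₁, n₂⟩
    show ‖F n₁ n₂‖ ≤ B₂ * (c₂⁻¹ * c₄⁻¹) * (u n₁ * v n₂)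
    have hnorm : ‖F n₁ n₂‖ = ‖z‖ ^ n₁ * ‖ω‖ ^ n₂ * ‖q‖ ^ (n₁ ^ 2 + 2 * n₁ * n₂ + 2 * n₂ ^ 2) *
        ‖qPoch (-(z * q)) (q ^ 2) n₂‖ /
          (‖qPoch (q ^ 2) (q ^ 2) n₁‖ * ‖qPoch (q ^ 4) (q ^ 4) n₂‖) := by
      simp only [hF, norm_div, norm_mul, norm_pow]
    rw [hnorm]
    have hqE : ‖q‖ ^ (n₁ ^ 2 + 2 * n₁ * n₂ + 2 * n₂ ^ 2) ≤ ‖q‖ ^ (n₁ ^ 2) * ‖q‖ ^ (2 * n₂ ^ 2) := by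
      rw [pow_add, pow_add]
      have h1 : ‖q‖ ^ (2 * n₁ * n₂) ≤ 1 := pow_le_one₀ (norm_nonneg q) hq'.le
      have := mul_le_mul_of_nonneg_right
        (mul_le_mul_of_nonneg_left h1 (pow_nonneg (norm_nonneg q) (n₁ ^ 2)))
        (pow_nonneg (norm_nonneg q) (2 * n₂ ^ 2))
      simpa using this
    have hP : ‖qPoch (-(z * q)) (q ^ 2) n₂‖ ≤ B₂ := norm_qPoch_le (-(z * q)) (q ^ 2) hq2 n₂
    have hD₁ : c₂ ≤ ‖qPoch (q ^ 2) (q ^ 2) n₁‖ := cLB_le (q ^ 2) hq2 n₁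
    have hD₂ : c₄ ≤ ‖qPoch (q ^ 4) (q ^ 4) n₂‖ := cLB_le (q ^ 4) hq4 n₂
    have hnum : ‖z‖ ^ n₁ * ‖ω‖ ^ n₂ * ‖q‖ ^ (n₁ ^ 2 + 2 * n₁ * n₂ + 2 * n₂ ^ 2) *
        ‖qPoch (-(z * q)) (q ^ 2) n₂‖
        ≤ ‖z‖ ^ n₁ * ‖ω‖ ^ n₂ * (‖q‖ ^ (n₁ ^ 2) * ‖q‖ ^ (2 * n₂ ^ 2)) * B₂ := by
      apply mul_le_mul _ hP (norm_nonneg _) (by positivity)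
      exact mul_le_mul_of_nonneg_left hqE (by positivity)
    calc ‖z‖ ^ n₁ * ‖ω‖ ^ n₂ * ‖q‖ ^ (n₁ ^ 2 + 2 * n₁ * n₂ + 2 * n₂ ^ 2) *
          ‖qPoch (-(z * q)) (q ^ 2) n₂‖ /
            (‖qPoch (q ^ 2) (q ^ 2) n₁‖ * ‖qPoch (q ^ 4) (q ^ 4) n₂‖)
        ≤ (‖z‖ ^ n₁ * ‖ω‖ ^ n₂ * (‖q‖ ^ (n₁ ^ 2) * ‖q‖ ^ (2 * n₂ ^ 2)) * B₂) / (c₂ * c₄) := by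
          apply div_le_div₀ (by positivity) hnum (by positivity)
          exact mul_le_mul hD₁ hD₂ hc₄pos.le (norm_nonneg _)
      _ = B₂ * (c₂⁻¹ * c₄⁻¹) * (u n₁ * v n₂) := by
          simp only [hu_def, hv_def]
          rw [div_eq_mul_inv, mul_inv]
          ring
  -- the inner sum over n₁ (after swapping)
  have hinner : ∀ n₂ : ℕ, ∑' n₁ : ℕ, F n₁ n₂
      = (ω ^ n₂ * q ^ (2 * n₂ ^ 2) * qPoch (-(z * q)) (q ^ 2) n₂ / qPoch (q ^ 4) (q ^ 4) n₂) *
          qPochInf (-(z * q ^ (2 * n₂ + 1))) (q ^ 2) := by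
    intro n₂
    have hterm : ∀ n₁ : ℕ, F n₁ n₂
        = (ω ^ n₂ * q ^ (2 * n₂ ^ 2) * qPoch (-(z * q)) (q ^ 2) n₂ / qPoch (q ^ 4) (q ^ 4) n₂) *
            ((q ^ 2) ^ n₁.choose 2 * (z * q ^ (2 * n₂ + 1)) ^ n₁ / qPoch (q ^ 2) (q ^ 2) n₁) := by
      intro n₁
      simp only [hF]
      rw [div_mul_div_comm]
      rw [show qPoch (q ^ 4) (q ^ 4) n₂ * qPoch (q ^ 2) (q ^ 2) n₁
        = qPoch (q ^ 2) (q ^ 2) n₁ * qPoch (q ^ 4) (q ^ 4) n₂ from mul_comm _ _]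
      congr 1
      have hexp : n₁ ^ 2 + 2 * n₁ * n₂ + 2 * n₂ ^ 2
          = 2 * n₂ ^ 2 + 2 * n₁.choose 2 + (2 * n₂ + 1) * n₁ := by
        rw [← two_choose n₁]; ring
      rw [hexp, pow_add, pow_add, mul_pow, ← pow_mul q 2, ← pow_mul q (2 * n₂ + 1)]
      ring
    rw [tsum_congr hterm, tsum_mul_left, QAux.euler (q ^ 2) (z * q ^ (2 * n₂ + 1)) hq2]
  -- Pochhammer shift identity
  have hsplit : ∀ n₂ : ℕ, qPoch (-(z * q)) (q ^ 2) n₂ * qPochInf (-(z * q ^ (2 * n₂ + 1))) (q ^ 2)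
      = qPochInf (-(z * q)) (q ^ 2) := by
    intro n₂
    have hpt : ∀ i : ℕ, (1 - -(z * q ^ (2 * n₂ + 1)) * (q ^ 2) ^ i : ℂ)
        = 1 - -(z * q) * (q ^ 2) ^ (i + n₂) := by
      intro i
      rw [pow_add q (2 * n₂) 1, pow_mul q 2 n₂, pow_add ((q:ℂ) ^ 2) i n₂]
      ring
    have hmul : Multipliable (fun i : ℕ => 1 - -(z * q) * (q ^ 2) ^ (i + n₂)) :=
      (multipliable_qp (-(z * q ^ (2 * n₂ + 1))) (q ^ 2) hq2).congr hpt
    have h := Multipliable.prod_mul_tprod_nat_mul'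
      (f := fun j : ℕ => 1 - -(z * q) * (q ^ 2) ^ j) (k := n₂) hmul
    have htail : ∏' i : ℕ, (1 - -(z * q) * (q ^ 2) ^ (i + n₂))
        = qPochInf (-(z * q ^ (2 * n₂ + 1))) (q ^ 2) := by
      exact tprod_congr fun i => (hpt i).symm
    rw [htail] at h
    exact h
  -- even/odd split
  have hEO : qPochInf (-(z * q)) (q ^ 2)
      = qPochInf (-(z * q)) (q ^ 4) * qPochInf (-(z * q ^ 3)) (q ^ 4) := by
    have he0 : Multipliable (fun k : ℕ => 1 - -(z * q) * (q ^ 4) ^ k) :=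
      multipliable_qp _ _ hq4
    have ho0 : Multipliable (fun k : ℕ => 1 - -(z * q ^ 3) * (q ^ 4) ^ k) :=
      multipliable_qp _ _ hq4
    have heeq : ∀ k : ℕ, (1 - -(z * q) * (q ^ 4) ^ k : ℂ) = 1 - -(z * q) * (q ^ 2) ^ (2 * k) := by
      intro k
      rw [← pow_mul q 4 k, ← pow_mul q 2 (2 * k), show 2 * (2 * k) = 4 * k by ring]
    have hoeq : ∀ k : ℕ,
        (1 - -(z * q ^ 3) * (q ^ 4) ^ k : ℂ) = 1 - -(z * q) * (q ^ 2) ^ (2 * k + 1) := by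
      intro k
      rw [← pow_mul q 4 k, ← pow_mul q 2 (2 * k + 1),
        show 2 * (2 * k + 1) = 4 * k + 2 by ring, pow_add q (4 * k) 2]
      ring
    have he : Multipliable (fun k : ℕ => 1 - -(z * q) * (q ^ 2) ^ (2 * k)) := he0.congr heeq
    have ho : Multipliable (fun k : ℕ => 1 - -(z * q) * (q ^ 2) ^ (2 * k + 1)) := ho0.congr hoeq
    have h := tprod_even_mul_odd (f := fun j : ℕ => 1 - -(z * q) * (q ^ 2) ^ j) he ho
    have h1 : ∏' k : ℕ, (1 - -(z * q) * (q ^ 2) ^ (2 * k)) = qPochInf (-(z * q)) (q ^ 4) :=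
      tprod_congr fun k => (heeq k).symm
    have h2 : ∏' k : ℕ, (1 - -(z * q) * (q ^ 2) ^ (2 * k + 1)) = qPochInf (-(z * q ^ 3)) (q ^ 4) :=
      tprod_congr fun k => (hoeq k).symm
    rw [h1, h2] at h
    exact h.symm
  -- put everything together
  show (∑' n₁ : ℕ, ∑' n₂ : ℕ, F n₁ n₂) = _
  calc (∑' n₁ : ℕ, ∑' n₂ : ℕ, F n₁ n₂)
      = ∑' n₂ : ℕ, ∑' n₁ : ℕ, F n₁ n₂ := (Summable.tsum_comm Hsum).symm
    _ = ∑' n₂ : ℕ, qPochInf (-(z * q)) (q ^ 2) *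
          ((q ^ 4) ^ n₂.choose 2 * (ω * q ^ 2) ^ n₂ / qPoch (q ^ 4) (q ^ 4) n₂) := by
        apply tsum_congr
        intro n₂
        rw [hinner n₂, ← hsplit n₂]
        have hpow : (ω : ℂ) ^ n₂ * q ^ (2 * n₂ ^ 2) = (q ^ 4) ^ n₂.choose 2 * (ω * q ^ 2) ^ n₂ := by
          rw [mul_pow, ← pow_mul q 4, ← pow_mul q 2,
            show 2 * n₂ ^ 2 = 4 * n₂.choose 2 + 2 * n₂ from by rw [← two_choose n₂]; ring,
            pow_add]
          ring
        simp only [div_eq_mul_inv]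
        rw [← hpow]
        ring
    _ = qPochInf (-(z * q)) (q ^ 2) * qPochInf (-(ω * q ^ 2)) (q ^ 4) := by
        rw [tsum_mul_left, QAux.euler (q ^ 4) (ω * q ^ 2) hq4]
    _ = qPochInf (-(z * q)) (q ^ 4) * qPochInf (-(z * q ^ 3)) (q ^ 4) *
          qPochInf (-(ω * q ^ 2)) (q ^ 4) := by rw [hEO]
end

section
/- For |q|<1 and complex ω, the refined single-series identity ∑_{n≥0} q^{n²+n} (-ωq^{-1};q²)_n / (q²;q²)_n = (-q²;q⁴)_∞ (-ωq;q⁴)_∞ (-q⁴;q⁴)_∞ holds. -/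
open scoped BigOperators

set_option maxHeartbeats 1600000

namespace Stmt10Aux

open Finset Filter Topology

/-- triangular numbers -/
def tri (n : ℕ) : ℕ := ∑ i ∈ Finset.range n, i

lemma tri_succ (n : ℕ) : tri (n + 1) = tri n + n := Finset.sum_range_succ _ _

lemma tri_add (x y : ℕ) : tri (x + y) = tri x + tri y + x * y := by
  induction y with
  | zero => simp [tri]
  | succ y ih =>
      have : x + (y + 1) = (x + y) + 1 := by omega
      rw [this, tri_succ, ih, tri_succ, Nat.mul_succ]
      omega

lemma two_tri (n : ℕ) : 2 * tri (n + 1) = n ^ 2 + n := by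
  have h := Finset.sum_range_id_mul_two (n + 1)
  simp only [Nat.add_sub_cancel] at h
  have h2 : (n + 1) * n = n ^ 2 + n := by ring
  unfold tri
  generalize n ^ 2 = m at *
  omega

lemma tri_sq (k : ℕ) : tri (k + 1) + tri k = k ^ 2 := by
  have h1 := tri_succ k
  have h2 := two_tri k
  generalize k ^ 2 = m at *
  omega

lemma qPoch_zero (a q : ℂ) : qPoch a q 0 = 1 := by simp [qPoch]

lemma qPoch_succ (a q : ℂ) (n : ℕ) :
    qPoch a q (n + 1) = qPoch a q n * (1 - a * q ^ n) := Finset.prod_range_succ _ _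

lemma qPochQ_succ (Q : ℂ) (n : ℕ) :
    qPoch Q Q (n + 1) = qPoch Q Q n * (1 - Q ^ (n + 1)) := by
  rw [qPoch_succ]; ring_nf

lemma one_sub_pow_ne (Q : ℂ) (hQ : ‖Q‖ < 1) (m : ℕ) : 1 - Q ^ (m + 1) ≠ 0 := by
  intro h
  have h1 : Q ^ (m + 1) = 1 := by linear_combination -h
  have : ‖Q ^ (m + 1)‖ < 1 := by
    rw [norm_pow]
    exact pow_lt_one₀ (norm_nonneg _) hQ (Nat.succ_ne_zero m)
  rw [h1, norm_one] at this
  exact lt_irrefl _ this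

/-- Weierstrass product inequality. -/
lemma one_sub_sum_le_prod (n : ℕ) (f : ℕ → ℝ) (h0 : ∀ i, 0 ≤ f i) (h1 : ∀ i, f i ≤ 1) :
    1 - ∑ i ∈ Finset.range n, f i ≤ ∏ i ∈ Finset.range n, (1 - f i) := by
  induction n with
  | zero => simp
  | succ n ih =>
      rw [Finset.sum_range_succ, Finset.prod_range_succ]
      have hs : 0 ≤ ∑ i ∈ Finset.range n, f i :=
        Finset.sum_nonneg fun i _ => h0 i
      nlinarith [h0 n, h1 n, ih]

/-- uniform positive lower bound for the partial products `∏ (1 - x^(j+1))`. -/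
lemma exists_pos_lb (x : ℝ) (h0 : 0 ≤ x) (h1 : x < 1) :
    ∃ c > 0, ∀ n, c ≤ ∏ j ∈ Finset.range n, (1 - x ^ (j + 1)) := by
  obtain ⟨N, hN⟩ := exists_pow_lt_of_lt_one (show (0:ℝ) < (1 - x)/2 * (1 - x) by nlinarith) h1
  have hfac : ∀ j : ℕ, 0 < 1 - x ^ (j + 1) := fun j => by
    have : x ^ (j + 1) < 1 := pow_lt_one₀ h0 h1 (Nat.succ_ne_zero j)
    linarith
  set A := ∏ j ∈ Finset.range N, (1 - x ^ (j + 1)) with hA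
  have hApos : 0 < A := Finset.prod_pos fun j _ => hfac j
  refine ⟨A * (1/2), by positivity, fun n => ?_⟩
  have tail_le_one : ∀ a m : ℕ, ∏ j ∈ Finset.range m, (1 - x ^ (a + j + 1)) ≤ 1 := by
    intro a m
    apply Finset.prod_le_one
    · exact fun j _ => le_of_lt (hfac _)
    · intro j _
      have : 0 ≤ x ^ (a + j + 1) := pow_nonneg h0 _
      linarith
  rcases le_or_gt n N with h | h
  · obtain ⟨m, rfl⟩ := Nat.exists_eq_add_of_le h
    have key : A ≤ ∏ j ∈ Finset.range n, (1 - x ^ (j + 1)) := by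
      rw [hA, Finset.prod_range_add]
      have h2 := tail_le_one n m
      have h3 : 0 < ∏ j ∈ Finset.range n, (1 - x ^ (j + 1)) :=
        Finset.prod_pos fun j _ => hfac j
      calc (∏ j ∈ Finset.range n, (1 - x ^ (j + 1))) *
              ∏ j ∈ Finset.range m, (1 - x ^ (n + j + 1))
          ≤ (∏ j ∈ Finset.range n, (1 - x ^ (j + 1))) * 1 := by
            apply mul_le_mul_of_nonneg_left h2 (le_of_lt h3)
        _ = _ := by ring
    nlinarith
  · obtain ⟨m, rfl⟩ := Nat.exists_eq_add_of_le (le_of_lt h)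
    rw [Finset.prod_range_add]
    have hsum : ∑ j ∈ Finset.range m, x ^ (N + j + 1) ≤ 1/2 := by
      have heq : ∀ j ∈ Finset.range m, x ^ (N + j + 1) = x ^ N * x * x ^ j := by
        intro j _; ring
      rw [Finset.sum_congr rfl heq, ← Finset.mul_sum]
      have hgeom : ∑ j ∈ Finset.range m, x ^ j ≤ (1 - x)⁻¹ := by
        have hs : Summable (fun j : ℕ => x ^ j) := summable_geometric_of_lt_one h0 h1
        have h2 := Summable.sum_le_tsum (Finset.range m) (fun i _ => pow_nonneg h0 i) hs
        rwa [tsum_geometric_of_lt_one h0 h1] at h2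
      have hx1 : 0 ≤ x ^ N * x := mul_nonneg (pow_nonneg h0 _) h0
      have h2 : x ^ N * x * ∑ j ∈ Finset.range m, x ^ j ≤ x ^ N * x * (1 - x)⁻¹ :=
        mul_le_mul_of_nonneg_left hgeom hx1
      refine h2.trans ?_
      rw [mul_inv_le_iff₀ (by linarith : (0:ℝ) < 1 - x)]
      nlinarith [pow_nonneg h0 N, hN]
    have hW := one_sub_sum_le_prod m (fun j => x ^ (N + j + 1))
      (fun i => pow_nonneg h0 _)
      (fun i => by
        have : 0 ≤ x ^ (N + i + 1) := pow_nonneg h0 _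
        have : x ^ (N + i + 1) < 1 := pow_lt_one₀ h0 h1 (Nat.succ_ne_zero _)
        linarith)
    have tail : (1:ℝ)/2 ≤ ∏ j ∈ Finset.range m, (1 - x ^ (N + j + 1)) := by
      refine le_trans ?_ hW
      linarith
    nlinarith

lemma qPochQ_norm_lb (Q : ℂ) (hQ : ‖Q‖ < 1) :
    ∃ c > 0, ∀ n, c ≤ ‖qPoch Q Q n‖ := by
  obtain ⟨c, hc, h⟩ := exists_pos_lb ‖Q‖ (norm_nonneg Q) hQ
  refine ⟨c, hc, fun n => (h n).trans ?_⟩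
  rw [qPoch, norm_prod]
  apply Finset.prod_le_prod
  · intro j _
    have : ‖Q‖ ^ (j + 1) < 1 := pow_lt_one₀ (norm_nonneg Q) hQ (Nat.succ_ne_zero j)
    linarith
  · intro j _
    have h1 : ‖Q * Q ^ j‖ = ‖Q‖ ^ (j + 1) := by
      rw [norm_mul, norm_pow]; ring
    calc 1 - ‖Q‖ ^ (j + 1) = ‖(1:ℂ)‖ - ‖Q * Q ^ j‖ := by rw [norm_one, h1]
      _ ≤ ‖1 - Q * Q ^ j‖ := norm_sub_norm_le _ _

lemma qPochQ_ne_zero (Q : ℂ) (hQ : ‖Q‖ < 1) (n : ℕ) : qPoch Q Q n ≠ 0 := by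
  obtain ⟨c, hc, h⟩ := qPochQ_norm_lb Q hQ
  intro h0
  have := h n
  rw [h0, norm_zero] at this
  linarith

lemma multipliable_one_sub (a Q : ℂ) (hQ : ‖Q‖ < 1) :
    Multipliable (fun j : ℕ => 1 - a * Q ^ j) := by
  by_cases hz : ∃ j0 : ℕ, 1 - a * Q ^ j0 = 0
  · obtain ⟨j0, hj0⟩ := hz
    refine ⟨0, ?_⟩
    rw [HasProd]
    apply Filter.Tendsto.congr' _ tendsto_const_nhds
    filter_upwards [Filter.eventually_ge_atTop ({j0} : Finset ℕ)] with s hs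
    have hj0s : j0 ∈ s := hs (Finset.mem_singleton_self j0)
    exact (Finset.prod_eq_zero hj0s hj0).symm
  · push_neg at hz
    apply Complex.multipliable_of_summable_log
    have hten : Filter.Tendsto (fun j : ℕ => ‖a‖ * ‖Q‖ ^ j) Filter.atTop (nhds 0) := by
      simpa using (tendsto_pow_atTop_nhds_zero_of_lt_one (norm_nonneg Q) hQ).const_mul ‖a‖
    have hev : ∀ᶠ j : ℕ in Filter.atTop, ‖a‖ * ‖Q‖ ^ j ≤ 1/2 :=
      hten.eventually_le_const (by norm_num)
    apply Summable.of_norm_bounded_eventually_nat (g := fun j => 3/2 * (‖a‖ * ‖Q‖ ^ j))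
    · exact ((summable_geometric_of_lt_one (norm_nonneg Q) hQ).mul_left ‖a‖).mul_left (3/2)
    · filter_upwards [hev] with j hj
      have h1 : (1 : ℂ) - a * Q ^ j = 1 + (-(a * Q ^ j)) := by ring
      rw [h1]
      have h2 : ‖-(a * Q ^ j)‖ ≤ 1/2 := by
        rw [norm_neg, norm_mul, norm_pow]; exact hj
      calc ‖Complex.log (1 + -(a * Q ^ j))‖ ≤ 3/2 * ‖-(a * Q ^ j)‖ :=
            Complex.norm_log_one_add_half_le_self h2
        _ = 3/2 * (‖a‖ * ‖Q‖ ^ j) := by rw [norm_neg, norm_mul, norm_pow]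

lemma euler_type_summable (Q z : ℂ) (hQ : ‖Q‖ < 1) (δ δ' : ℕ) :
    Summable (fun n : ℕ => Q ^ tri (n + δ) * z ^ n / qPoch Q Q (n + δ')) := by
  set f : ℕ → ℂ := fun n => Q ^ tri (n + δ) * z ^ n / qPoch Q Q (n + δ') with hf
  have hPne : ∀ m, qPoch Q Q m ≠ 0 := qPochQ_ne_zero Q hQ
  have hone : ∀ m : ℕ, (1 : ℂ) - Q ^ (m + 1) ≠ 0 := one_sub_pow_ne Q hQ
  have key : ∀ n, f (n + 1) = f n * (Q ^ (n + δ) * z / (1 - Q ^ (n + δ' + 1))) := by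
    intro n
    have h1 : n + 1 + δ = (n + δ) + 1 := by omega
    have h2 : n + 1 + δ' = (n + δ') + 1 := by omega
    rw [hf]
    simp only
    rw [h1, h2, tri_succ, pow_add Q (tri (n + δ)) (n + δ), qPochQ_succ, pow_succ z]
    have e1 := hPne (n + δ')
    have e2 := hone (n + δ')
    field_simp
  apply summable_of_ratio_norm_eventually_le (r := 1/2) (by norm_num)
  have hten : Filter.Tendsto (fun n : ℕ => ‖z‖ * ‖Q‖ ^ δ * ‖Q‖ ^ n)
      Filter.atTop (nhds 0) := by
    simpa using (tendsto_pow_atTop_nhds_zero_of_lt_one (norm_nonneg Q) hQ).const_mul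
      (‖z‖ * ‖Q‖ ^ δ)
  have hev : ∀ᶠ n : ℕ in Filter.atTop, ‖z‖ * ‖Q‖ ^ δ * ‖Q‖ ^ n ≤ (1 - ‖Q‖)/2 :=
    hten.eventually_le_const (by linarith)
  filter_upwards [hev] with n hn
  rw [key n, norm_mul]
  have hub : ‖Q ^ (n + δ) * z / (1 - Q ^ (n + δ' + 1))‖ ≤ 1/2 := by
    rw [norm_div, norm_mul, norm_pow]
    have hden : 1 - ‖Q‖ ≤ ‖1 - Q ^ (n + δ' + 1)‖ := by
      have h3 : ‖Q ^ (n + δ' + 1)‖ ≤ ‖Q‖ := by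
        rw [norm_pow, pow_succ]
        have h4 : ‖Q‖ ^ (n + δ') ≤ 1 := pow_le_one₀ (norm_nonneg Q) hQ.le
        nlinarith [norm_nonneg Q]
      calc 1 - ‖Q‖ ≤ ‖(1:ℂ)‖ - ‖Q ^ (n + δ' + 1)‖ := by rw [norm_one]; linarith
        _ ≤ _ := norm_sub_norm_le _ _
    rw [div_le_iff₀ (by linarith : (0:ℝ) < ‖1 - Q ^ (n + δ' + 1)‖)]
    calc ‖Q‖ ^ (n + δ) * ‖z‖ = ‖z‖ * ‖Q‖ ^ δ * ‖Q‖ ^ n := by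
          rw [pow_add]; ring
      _ ≤ (1 - ‖Q‖)/2 := hn
      _ ≤ 1/2 * ‖1 - Q ^ (n + δ' + 1)‖ := by linarith
  calc ‖f n‖ * ‖Q ^ (n + δ) * z / (1 - Q ^ (n + δ' + 1))‖
      ≤ ‖f n‖ * (1/2) := mul_le_mul_of_nonneg_left hub (norm_nonneg _)
    _ = 1/2 * ‖f n‖ := by ring

lemma euler_feq (Q z : ℂ) (hQ : ‖Q‖ < 1) :
    ∑' n : ℕ, Q ^ tri n * z ^ n / qPoch Q Q n
      = (1 + z) * ∑' n : ℕ, Q ^ tri n * (Q * z) ^ n / qPoch Q Q n := by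
  have hPne := qPochQ_ne_zero Q hQ
  have hone := one_sub_pow_ne Q hQ
  have hfz : Summable (fun n : ℕ => Q ^ tri n * z ^ n / qPoch Q Q n) := by
    simpa using euler_type_summable Q z hQ 0 0
  have hfqz : Summable (fun n : ℕ => Q ^ tri n * (Q * z) ^ n / qPoch Q Q n) := by
    simpa using euler_type_summable Q (Q * z) hQ 0 0
  have hsub : ∑' n : ℕ,
      (Q ^ tri n * z ^ n / qPoch Q Q n - Q ^ tri n * (Q * z) ^ n / qPoch Q Q n)
      = z * ∑' n : ℕ, Q ^ tri n * (Q * z) ^ n / qPoch Q Q n := by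
    rw [Summable.tsum_eq_zero_add (hfz.sub hfqz)]
    have h0 : Q ^ tri 0 * z ^ 0 / qPoch Q Q 0 - Q ^ tri 0 * (Q * z) ^ 0 / qPoch Q Q 0
        = 0 := by simp
    rw [h0, zero_add]
    have hterm : ∀ n : ℕ,
        Q ^ tri (n + 1) * z ^ (n + 1) / qPoch Q Q (n + 1)
          - Q ^ tri (n + 1) * (Q * z) ^ (n + 1) / qPoch Q Q (n + 1)
          = z * (Q ^ tri n * (Q * z) ^ n / qPoch Q Q n) := by
      intro n
      rw [tri_succ, qPochQ_succ, pow_add]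
      have e1 := hPne n
      have e2 := hone n
      field_simp
      ring
    rw [tsum_congr hterm, tsum_mul_left]
  rw [Summable.tsum_sub hfz hfqz] at hsub
  linear_combination hsub

lemma euler_sum (Q z : ℂ) (hQ : ‖Q‖ < 1) :
    ∑' n : ℕ, Q ^ tri n * z ^ n / qPoch Q Q n = ∏' j : ℕ, (1 + z * Q ^ j) := by
  set A : ℕ → ℂ := fun n => ∏ j ∈ Finset.range n, (1 + z * Q ^ j) with hA
  set B : ℕ → ℂ := fun n => ∑' m : ℕ, Q ^ tri m * (Q ^ n * z) ^ m / qPoch Q Q m with hB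
  have hiter : ∀ n : ℕ, ∑' m : ℕ, Q ^ tri m * z ^ m / qPoch Q Q m = A n * B n := by
    intro n
    induction n with
    | zero =>
        have h0 : A 0 = 1 := by simp [hA]
        rw [h0, one_mul, hB]
        exact tsum_congr fun m => by rw [pow_zero, one_mul]
    | succ n ih =>
        have hfeq := euler_feq Q (Q ^ n * z) hQ
        rw [show Q * (Q ^ n * z) = Q ^ (n + 1) * z by ring] at hfeq
        have hBstep : B n = (1 + Q ^ n * z) * B (n + 1) := hfeq
        rw [ih, hBstep, hA]
        simp only
        rw [Finset.prod_range_succ]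
        ring
  have hmul : Multipliable (fun j : ℕ => 1 + z * Q ^ j) := by
    have heq : (fun j : ℕ => 1 + z * Q ^ j) = fun j : ℕ => 1 - (-z) * Q ^ j := by
      funext j; ring
    rw [heq]
    exact multipliable_one_sub (-z) Q hQ
  have hAten : Filter.Tendsto A Filter.atTop (nhds (∏' j : ℕ, (1 + z * Q ^ j))) :=
    hmul.hasProd.tendsto_prod_nat
  -- the tail sum K
  have hKsummC : Summable (fun m : ℕ => Q ^ tri (m + 1) * z ^ m / qPoch Q Q (m + 1)) :=
    euler_type_summable Q z hQ 1 1
  have hKsumm : Summable (fun m : ℕ => ‖Q ^ tri (m + 1) * z ^ m / qPoch Q Q (m + 1)‖) :=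
    summable_norm_iff.mpr hKsummC
  set K : ℝ := ∑' m : ℕ, ‖Q ^ tri (m + 1) * z ^ m / qPoch Q Q (m + 1)‖ with hK
  have hBbound : ∀ n : ℕ, ‖B n - 1‖ ≤ ‖Q‖ ^ n * ‖z‖ * K := by
    intro n
    have hsummn : Summable (fun m : ℕ => Q ^ tri m * (Q ^ n * z) ^ m / qPoch Q Q m) := by
      simpa using euler_type_summable Q (Q ^ n * z) hQ 0 0
    have hsplit : B n = 1 + ∑' m : ℕ,
        Q ^ tri (m + 1) * (Q ^ n * z) ^ (m + 1) / qPoch Q Q (m + 1) := by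
      rw [hB]
      simp only
      rw [Summable.tsum_eq_zero_add hsummn]
      congr 1
      simp [tri, qPoch_zero]
    rw [hsplit]
    simp only [add_sub_cancel_left]
    have hsummn1 : Summable (fun m : ℕ =>
        Q ^ tri (m + 1) * (Q ^ n * z) ^ (m + 1) / qPoch Q Q (m + 1)) := by
      have h5 := euler_type_summable Q (Q ^ n * z) hQ 1 1
      apply Summable.congr (h5.mul_right (Q ^ n * z))
      intro m
      field_simp
      ring
    have hnorms : Summable (fun m : ℕ =>
        ‖Q ^ tri (m + 1) * (Q ^ n * z) ^ (m + 1) / qPoch Q Q (m + 1)‖) :=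
      summable_norm_iff.mpr hsummn1
    refine (norm_tsum_le_tsum_norm hnorms).trans ?_
    have hterm : ∀ m : ℕ, ‖Q ^ tri (m + 1) * (Q ^ n * z) ^ (m + 1) / qPoch Q Q (m + 1)‖
        ≤ ‖Q‖ ^ n * ‖z‖ * ‖Q ^ tri (m + 1) * z ^ m / qPoch Q Q (m + 1)‖ := by
      intro m
      rw [norm_div, norm_div, norm_mul, norm_mul]
      have hb : ‖(Q ^ n * z) ^ (m + 1)‖ ≤ ‖Q‖ ^ n * ‖z‖ * ‖z ^ m‖ := by
        rw [norm_pow, norm_mul, norm_pow, norm_pow, mul_pow, pow_succ ‖z‖]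
        have h7 : (‖Q‖ ^ n) ^ (m + 1) ≤ ‖Q‖ ^ n :=
          pow_le_of_le_one (pow_nonneg (norm_nonneg _) _)
            (pow_le_one₀ (norm_nonneg _) hQ.le) (Nat.succ_ne_zero m)
        have h8 : (0:ℝ) ≤ ‖z‖ ^ m := pow_nonneg (norm_nonneg z) m
        calc (‖Q‖ ^ n) ^ (m + 1) * (‖z‖ ^ m * ‖z‖)
            ≤ ‖Q‖ ^ n * (‖z‖ ^ m * ‖z‖) :=
              mul_le_mul_of_nonneg_right h7 (mul_nonneg h8 (norm_nonneg z))
          _ = ‖Q‖ ^ n * ‖z‖ * ‖z‖ ^ m := by ring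
      calc ‖Q ^ tri (m + 1)‖ * ‖(Q ^ n * z) ^ (m + 1)‖ / ‖qPoch Q Q (m + 1)‖
          ≤ ‖Q ^ tri (m + 1)‖ * (‖Q‖ ^ n * ‖z‖ * ‖z ^ m‖) / ‖qPoch Q Q (m + 1)‖ := by
            gcongr
        _ = ‖Q‖ ^ n * ‖z‖ * (‖Q ^ tri (m + 1)‖ * ‖z ^ m‖ / ‖qPoch Q Q (m + 1)‖) := by
            ring
    refine (Summable.tsum_le_tsum hterm hnorms (hKsumm.mul_left _)).trans_eq ?_
    rw [tsum_mul_left]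
  have hBten : Filter.Tendsto B Filter.atTop (nhds 1) := by
    have h0 : Filter.Tendsto (fun n : ℕ => ‖Q‖ ^ n * ‖z‖ * K) Filter.atTop (nhds 0) := by
      have := (tendsto_pow_atTop_nhds_zero_of_lt_one (norm_nonneg Q) hQ).mul_const (‖z‖ * K)
      simpa [mul_assoc] using this
    have h1 : Filter.Tendsto (fun n : ℕ => ‖B n - 1‖) Filter.atTop (nhds 0) :=
      squeeze_zero (fun n => norm_nonneg _) hBbound h0
    have h2 : Filter.Tendsto (fun n : ℕ => B n - 1) Filter.atTop (nhds 0) :=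
      tendsto_zero_iff_norm_tendsto_zero.mpr h1
    have h3 : Filter.Tendsto (fun n : ℕ => (B n - 1) + 1) Filter.atTop (nhds (0 + 1)) :=
      h2.add tendsto_const_nhds
    simpa using h3
  have hfinal : Filter.Tendsto (fun n : ℕ => A n * B n) Filter.atTop
      (nhds ((∏' j : ℕ, (1 + z * Q ^ j)) * 1)) := hAten.mul hBten
  have hconst : Filter.Tendsto (fun _ : ℕ => ∑' m : ℕ, Q ^ tri m * z ^ m / qPoch Q Q m)
      Filter.atTop (nhds (∑' m : ℕ, Q ^ tri m * z ^ m / qPoch Q Q m)) := tendsto_const_nhds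
  have := tendsto_nhds_unique (hconst.congr fun n => hiter n) hfinal
  simpa using this

lemma qbinom (Q : ℂ) (hQ : ‖Q‖ < 1) (a : ℂ) (n : ℕ) :
    qPoch a Q n = ∑ k ∈ Finset.range (n + 1),
      (-1) ^ k * Q ^ tri k * a ^ k *
        (qPoch Q Q n / (qPoch Q Q k * qPoch Q Q (n - k))) := by
  have hP := qPochQ_ne_zero Q hQ
  have hone := one_sub_pow_ne Q hQ
  set w : ℕ → ℂ := fun k => (-1) ^ k * Q ^ tri k * a ^ k with hw
  set R : ℕ → ℕ → ℂ := fun n k => qPoch Q Q n / (qPoch Q Q k * qPoch Q Q (n - k)) with hR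
  show qPoch a Q n = ∑ k ∈ Finset.range (n + 1), w k * R n k
  induction n with
  | zero =>
      rw [Finset.sum_range_one, qPoch_zero]
      simp only [hw, hR]
      simp [tri, qPoch_zero]
  | succ n ih =>
      have hR0 : ∀ m, R m 0 = 1 := by
        intro m
        rw [hR]
        simp only [Nat.sub_zero, qPoch_zero, one_mul]
        exact div_self (hP m)
      have hRdiag : ∀ m, R m m = 1 := by
        intro m
        rw [hR]
        simp only [Nat.sub_self, qPoch_zero, mul_one]
        exact div_self (hP m)
      have key : ∀ k i : ℕ, R (k + i + 2) (k + 1)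
          = R (k + i + 1) (k + 1) + Q ^ (i + 1) * R (k + i + 1) k := by
        intro k i
        rw [hR]
        simp only
        have e1 : k + i + 2 - (k + 1) = i + 1 := by omega
        have e2 : k + i + 1 - (k + 1) = i := by omega
        have e3 : k + i + 1 - k = i + 1 := by omega
        rw [e1, e2, e3, show k + i + 2 = (k + i + 1) + 1 from rfl,
          qPochQ_succ Q (k + i + 1), qPochQ_succ Q i, qPochQ_succ Q k]
        have n1 := hP k
        have n2 := hP i
        have n3 := hP (k + i + 1)
        have n4 := hone k
        have n5 := hone i
        field_simp
        ring
      have hflip : ∀ k ∈ Finset.range (n + 1), w k * R n k * (a * Q ^ n)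
          = -(w (k + 1) * (Q ^ (n - k) * R n k)) := by
        intro k hk
        have hk' : k ≤ n := Nat.lt_succ_iff.mp (Finset.mem_range.mp hk)
        have hpow : Q ^ k * Q ^ (n - k) = Q ^ n := by
          rw [← pow_add]
          congr 1
          omega
        simp only [hw]
        rw [tri_succ, pow_add Q (tri k) k]
        linear_combination (-((-1 : ℂ) ^ k * Q ^ tri k * a ^ k * a * R n k)) * hpow
      rw [qPoch_succ, ih, mul_one_sub, Finset.sum_mul, Finset.sum_congr rfl hflip,
        Finset.sum_neg_distrib, sub_neg_eq_add]
      rw [Finset.sum_range_succ' (fun k => w k * R (n + 1) k) (n + 1),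
        Finset.sum_range_succ' (fun k => w k * R n k) n,
        Finset.sum_range_succ (fun k => w (k + 1) * (Q ^ (n - k) * R n k)) n,
        Finset.sum_range_succ (fun k => w (k + 1) * R (n + 1) (k + 1)) n]
      have hcomb : ∀ k ∈ Finset.range n, w (k + 1) * R (n + 1) (k + 1)
          = w (k + 1) * R n (k + 1) + w (k + 1) * (Q ^ (n - k) * R n k) := by
        intro k hk
        have hkn : k < n := Finset.mem_range.mp hk
        obtain ⟨i, rfl⟩ : ∃ i, n = k + i + 1 := ⟨n - k - 1, by omega⟩
        have e4 : k + i + 1 - k = i + 1 := by omega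
        rw [show k + i + 1 + 1 = k + i + 2 from rfl, key k i, e4]
        ring
      rw [Finset.sum_congr rfl hcomb, Finset.sum_add_distrib]
      rw [hR0 n, hR0 (n + 1), hRdiag n, hRdiag (n + 1), Nat.sub_self, pow_zero]
      ring

lemma tsum_swap_diag (F : ℕ × ℕ → ℂ) (h : Summable F) :
    ∑' n : ℕ, ∑ k ∈ Finset.range (n + 1), F (k, n - k) = ∑' k : ℕ, ∑' m : ℕ, F (k, m) := by
  rw [← Summable.tsum_prod h]
  have h1 : ∀ n : ℕ, ∑ k ∈ Finset.range (n + 1), F (k, n - k)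
      = ∑ kl ∈ Finset.HasAntidiagonal.antidiagonal n, F kl := by
    intro n
    rw [← Finset.Nat.sum_antidiagonal_eq_sum_range_succ (f := fun k l => F (k, l))]
  rw [tsum_congr h1]
  conv_lhs => congr; ext n; rw [← Finset.sum_finset_coe, ← tsum_fintype (L := SummationFilter.unconditional _)]
  rw [← Finset.HasAntidiagonal.sigmaAntidiagonalEquivProd.tsum_eq F]
  exact (Summable.tsum_sigma' (fun n => (hasSum_fintype _).summable)
    (Finset.HasAntidiagonal.sigmaAntidiagonalEquivProd.summable_iff.mpr h)).symm

lemma real_type_summable (x y : ℝ) (hx0 : 0 ≤ x) (hx : x < 1) (hy : 0 ≤ y) (δ : ℕ) :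
    Summable (fun n : ℕ => x ^ tri (n + δ) * y ^ n) := by
  set f : ℕ → ℝ := fun n => x ^ tri (n + δ) * y ^ n with hf
  have hfnn : ∀ n, 0 ≤ f n := fun n => mul_nonneg (pow_nonneg hx0 _) (pow_nonneg hy _)
  have key : ∀ n, f (n + 1) = f n * (x ^ (n + δ) * y) := by
    intro n
    rw [hf]
    simp only
    rw [show n + 1 + δ = (n + δ) + 1 from by omega, tri_succ, pow_add, pow_succ]
    ring
  apply summable_of_ratio_norm_eventually_le (r := 1/2) (by norm_num)
  have hten : Filter.Tendsto (fun n : ℕ => x ^ δ * y * x ^ n) Filter.atTop (nhds 0) := by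
    simpa using (tendsto_pow_atTop_nhds_zero_of_lt_one hx0 hx).const_mul (x ^ δ * y)
  have hev : ∀ᶠ n : ℕ in Filter.atTop, x ^ δ * y * x ^ n ≤ 1/2 :=
    hten.eventually_le_const (by norm_num)
  filter_upwards [hev] with n hn
  rw [key n, Real.norm_eq_abs, Real.norm_eq_abs, abs_of_nonneg (hfnn n),
    abs_of_nonneg (mul_nonneg (hfnn n) (mul_nonneg (pow_nonneg hx0 _) hy))]
  have h2 : x ^ (n + δ) * y ≤ 1/2 := by
    rw [pow_add]
    calc x ^ n * x ^ δ * y = x ^ δ * y * x ^ n := by ring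
      _ ≤ 1/2 := hn
  calc f n * (x ^ (n + δ) * y) ≤ f n * (1/2) :=
        mul_le_mul_of_nonneg_left h2 (hfnn n)
    _ = 1/2 * f n := by ring

lemma poch_split (Q : ℂ) (k : ℕ) :
    qPoch (Q ^ 2) (Q ^ 2) k = qPoch Q Q k * qPoch (-Q) Q k := by
  rw [qPoch, qPoch, qPoch, ← Finset.prod_mul_distrib]
  apply Finset.prod_congr rfl
  intro j _
  ring

lemma lebesgue (Q a : ℂ) (hQ : ‖Q‖ < 1) :
    ∑' n : ℕ, Q ^ tri (n + 1) * qPoch a Q n / qPoch Q Q n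
      = qPochInf (-Q) Q * qPochInf (a * Q) (Q ^ 2) := by
  have hP := qPochQ_ne_zero Q hQ
  have hQ2 : ‖Q ^ 2‖ < 1 := by
    rw [norm_pow]
    exact pow_lt_one₀ (norm_nonneg _) hQ two_ne_zero
  have hP2 := qPochQ_ne_zero (Q ^ 2) hQ2
  obtain ⟨c, hc, hlb⟩ := qPochQ_norm_lb Q hQ
  set w : ℕ → ℂ := fun k => (-1) ^ k * Q ^ tri k * a ^ k with hw
  set F : ℕ × ℕ → ℂ :=
    fun p => Q ^ tri (p.1 + p.2 + 1) * w p.1 / (qPoch Q Q p.1 * qPoch Q Q p.2) with hF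
  have hsummF : Summable F := by
    have hG : Summable (fun k : ℕ => ‖Q‖ ^ tri (k + 1) * ‖a‖ ^ k * c⁻¹) :=
      (real_type_summable ‖Q‖ ‖a‖ (norm_nonneg _) hQ (norm_nonneg _) 1).mul_right c⁻¹
    have hH : Summable (fun m : ℕ => ‖Q‖ ^ tri m * (1:ℝ) ^ m * c⁻¹) :=
      (real_type_summable ‖Q‖ 1 (norm_nonneg _) hQ one_pos.le 0).mul_right c⁻¹
    have hprod : Summable (fun p : ℕ × ℕ =>
        (‖Q‖ ^ tri (p.1 + 1) * ‖a‖ ^ p.1 * c⁻¹) * (‖Q‖ ^ tri p.2 * (1:ℝ) ^ p.2 * c⁻¹)) :=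
      hG.mul_of_nonneg hH
        (fun k => by positivity)
        (fun m => by positivity)
    apply Summable.of_norm
    apply hprod.of_nonneg_of_le (fun p => norm_nonneg _)
    rintro ⟨k, m⟩
    simp only [hF, hw, one_pow, mul_one]
    rw [norm_div, norm_mul, norm_mul, norm_mul, norm_mul, norm_pow, norm_pow, norm_pow,
      norm_pow, norm_neg, norm_one, one_pow, one_mul]
    have hden : c * c ≤ ‖qPoch Q Q k‖ * ‖qPoch Q Q m‖ :=
      mul_le_mul (hlb k) (hlb m) hc.le (norm_nonneg _)
    have hnum : ‖Q‖ ^ tri (k + m + 1) * (‖Q‖ ^ tri k * ‖a‖ ^ k)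
        ≤ ‖Q‖ ^ tri (k + 1) * ‖a‖ ^ k * (‖Q‖ ^ tri m) := by
      have e1 : tri (k + 1) + tri m ≤ tri (k + m + 1) := by
        have := tri_add (k + 1) m
        rw [show k + m + 1 = (k + 1) + m from by omega, this]
        omega
      have e2 : ‖Q‖ ^ tri (k + m + 1) ≤ ‖Q‖ ^ (tri (k + 1) + tri m) :=
        pow_le_pow_of_le_one (norm_nonneg _) hQ.le e1
      have e3 : ‖Q‖ ^ tri k ≤ 1 := pow_le_one₀ (norm_nonneg _) hQ.le
      calc ‖Q‖ ^ tri (k + m + 1) * (‖Q‖ ^ tri k * ‖a‖ ^ k)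
          ≤ ‖Q‖ ^ (tri (k + 1) + tri m) * (1 * ‖a‖ ^ k) := by
            apply mul_le_mul e2 _ (by positivity) (by positivity)
            exact mul_le_mul_of_nonneg_right e3 (by positivity)
        _ = ‖Q‖ ^ tri (k + 1) * ‖a‖ ^ k * ‖Q‖ ^ tri m := by
            rw [pow_add]; ring
    calc ‖Q‖ ^ tri (k + m + 1) * (‖Q‖ ^ tri k * ‖a‖ ^ k) /
          (‖qPoch Q Q k‖ * ‖qPoch Q Q m‖)
        ≤ ‖Q‖ ^ tri (k + 1) * ‖a‖ ^ k * ‖Q‖ ^ tri m / (c * c) := by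
          apply div_le_div₀ (by positivity) hnum (by positivity) hden
      _ = ‖Q‖ ^ tri (k + 1) * ‖a‖ ^ k * c⁻¹ * (‖Q‖ ^ tri m * c⁻¹) := by
          field_simp
  have hstep2 : ∀ n : ℕ, Q ^ tri (n + 1) * qPoch a Q n / qPoch Q Q n
      = ∑ k ∈ Finset.range (n + 1), F (k, n - k) := by
    intro n
    rw [qbinom Q hQ a n, Finset.mul_sum, Finset.sum_div]
    apply Finset.sum_congr rfl
    intro k hk
    have hk' : k ≤ n := Nat.lt_succ_iff.mp (Finset.mem_range.mp hk)
    simp only [hF, hw]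
    rw [show k + (n - k) + 1 = n + 1 from by omega]
    have n1 := hP n
    have n2 := hP k
    have n3 := hP (n - k)
    field_simp
  rw [tsum_congr hstep2, tsum_swap_diag F hsummF]
  have hinner : ∀ k : ℕ, ∑' m : ℕ, F (k, m)
      = (Q ^ tri (k + 1) * w k / qPoch Q Q k) * ∏' j : ℕ, (1 + Q ^ (k + 1) * Q ^ j) := by
    intro k
    rw [← euler_sum Q (Q ^ (k + 1)) hQ, ← tsum_mul_left]
    apply tsum_congr
    intro m
    simp only [hF]
    rw [show k + m + 1 = (k + 1) + m from by omega, tri_add (k + 1) m, pow_add, pow_add,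
      pow_mul]
    have n1 := hP k
    have n2 := hP m
    field_simp
  rw [tsum_congr hinner]
  have hTk : ∀ k : ℕ, (∏' j : ℕ, (1 + Q ^ (k + 1) * Q ^ j))
      = ∏' i : ℕ, (1 + Q * Q ^ (i + k)) := by
    intro k
    apply tprod_congr
    intro j
    rw [pow_add, pow_add, pow_one]
    ring
  have hBT : ∀ k : ℕ, qPoch (-Q) Q k * ∏' i : ℕ, (1 + Q * Q ^ (i + k))
      = ∏' j : ℕ, (1 + Q * Q ^ j) := by
    intro k
    have hmt : Multipliable (fun n : ℕ => 1 + Q * Q ^ (n + k)) := by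
      have heq : (fun n : ℕ => 1 + Q * Q ^ (n + k)) = fun n : ℕ => 1 - (-(Q ^ (k + 1))) * Q ^ n := by
        funext n
        rw [pow_add, pow_add, pow_one]
        ring
      rw [heq]
      exact multipliable_one_sub _ Q hQ
    rw [← Multipliable.prod_mul_tprod_nat_mul' (f := fun j => 1 + Q * Q ^ j) hmt]
    congr 1
    rw [qPoch]
    apply Finset.prod_congr rfl
    intro j _
    ring
  have hBne : ∀ k : ℕ, qPoch (-Q) Q k ≠ 0 := by
    intro k h0
    apply hP2 k
    rw [poch_split, h0, mul_zero]
  have hCE : ∀ k : ℕ, Q ^ tri (k + 1) * w k / qPoch Q Q k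
      = ((Q ^ 2) ^ tri k * (-(a * Q)) ^ k / qPoch (Q ^ 2) (Q ^ 2) k) * qPoch (-Q) Q k := by
    intro k
    have hsc : Q ^ tri (k + 1) * ((-1 : ℂ) ^ k * Q ^ tri k * a ^ k)
        = (Q ^ 2) ^ tri k * (-(a * Q)) ^ k := by
      have e4 : 2 * tri k + k = k ^ 2 := by
        have h5 := tri_sq k
        have h6 := tri_succ k
        generalize k ^ 2 = m at *
        omega
      calc Q ^ tri (k + 1) * ((-1 : ℂ) ^ k * Q ^ tri k * a ^ k)
          = Q ^ (tri (k + 1) + tri k) * ((-1 : ℂ) ^ k * a ^ k) := by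
            rw [pow_add]; ring
        _ = Q ^ (2 * tri k + k) * ((-1 : ℂ) ^ k * a ^ k) := by rw [tri_sq k, e4]
        _ = (Q ^ 2) ^ tri k * (-(a * Q)) ^ k := by
            rw [pow_add, pow_mul, ← pow_mul, mul_comm 2 (tri k), pow_mul]
            rw [show (-(a * Q)) ^ k = (-1 : ℂ) ^ k * a ^ k * Q ^ k from by
              rw [show -(a * Q) = (-1 : ℂ) * a * Q from by ring, mul_pow, mul_pow]]
            ring
    simp only [hw]
    rw [poch_split]
    have n1 := hP k
    have n2 := hBne k
    field_simp
    linear_combination hsc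
  calc ∑' k : ℕ, (Q ^ tri (k + 1) * w k / qPoch Q Q k) * ∏' j : ℕ, (1 + Q ^ (k + 1) * Q ^ j)
      = ∑' k : ℕ, ((Q ^ 2) ^ tri k * (-(a * Q)) ^ k / qPoch (Q ^ 2) (Q ^ 2) k) *
          ∏' j : ℕ, (1 + Q * Q ^ j) := by
        apply tsum_congr
        intro k
        rw [hTk k, hCE k, mul_assoc, hBT k]
    _ = (∑' k : ℕ, (Q ^ 2) ^ tri k * (-(a * Q)) ^ k / qPoch (Q ^ 2) (Q ^ 2) k) *
          ∏' j : ℕ, (1 + Q * Q ^ j) := tsum_mul_right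
    _ = qPochInf (-Q) Q * qPochInf (a * Q) (Q ^ 2) := by
        rw [euler_sum (Q ^ 2) (-(a * Q)) hQ2, mul_comm]
        unfold qPochInf
        congr 1
        · exact tprod_congr fun j => by ring
        · exact tprod_congr fun j => by ring

end Stmt10Aux

theorem stmt10 (q ω : ℂ) (hq : ‖q‖ < 1) :
    ∑' n : ℕ, q ^ (n ^ 2 + n) * qPoch (-(ω * q⁻¹)) (q ^ 2) n / qPoch (q ^ 2) (q ^ 2) n
      = qPochInf (-q ^ 2) (q ^ 4) * qPochInf (-(ω * q)) (q ^ 4) *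
          qPochInf (-q ^ 4) (q ^ 4) := by
  by_cases hq0 : q = 0
  · subst hq0
    have hL : ∑' n : ℕ, (0:ℂ) ^ (n ^ 2 + n) * qPoch (-(ω * (0:ℂ)⁻¹)) ((0:ℂ) ^ 2) n /
        qPoch ((0:ℂ) ^ 2) ((0:ℂ) ^ 2) n = 1 := by
      rw [tsum_eq_single 0]
      · norm_num [Stmt10Aux.qPoch_zero]
      · intro n hn
        have h2 : (0:ℂ) ^ (n ^ 2 + n) = 0 := by
          apply zero_pow
          have := Nat.pos_of_ne_zero hn
          positivity
        rw [h2, zero_mul, zero_div]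
    rw [hL]
    norm_num [qPochInf]
  · have hq2 : ‖q ^ 2‖ < 1 := by
      rw [norm_pow]
      exact pow_lt_one₀ (norm_nonneg _) hq two_ne_zero
    have hq4 : ‖q ^ 4‖ < 1 := by
      rw [norm_pow]
      exact pow_lt_one₀ (norm_nonneg _) hq four_ne_zero
    have hmain := Stmt10Aux.lebesgue (q ^ 2) (-(ω * q⁻¹)) hq2
    rw [show (∑' n : ℕ, q ^ (n ^ 2 + n) * qPoch (-(ω * q⁻¹)) (q ^ 2) n /
          qPoch (q ^ 2) (q ^ 2) n)
        = ∑' n : ℕ, (q ^ 2) ^ Stmt10Aux.tri (n + 1) * qPoch (-(ω * q⁻¹)) (q ^ 2) n /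
          qPoch (q ^ 2) (q ^ 2) n from
      tsum_congr fun n => by rw [← pow_mul, Stmt10Aux.two_tri n]]
    rw [hmain]
    have e1 : (-(ω * q⁻¹)) * q ^ 2 = -(ω * q) := by
      field_simp
    have e2 : ((q : ℂ) ^ 2) ^ 2 = q ^ 4 := by ring
    rw [e1, e2]
    have hsplit : qPochInf (-(q ^ 2)) (q ^ 2)
        = qPochInf (-q ^ 2) (q ^ 4) * qPochInf (-q ^ 4) (q ^ 4) := by
      have hme : Multipliable (fun k : ℕ => 1 - (-q ^ 2) * (q ^ 4) ^ k) :=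
        Stmt10Aux.multipliable_one_sub _ _ hq4
      have hmo : Multipliable (fun k : ℕ => 1 - (-q ^ 4) * (q ^ 4) ^ k) :=
        Stmt10Aux.multipliable_one_sub _ _ hq4
      have heqe : ∀ k : ℕ, 1 - (-q ^ 2) * (q ^ 4) ^ k
          = 1 - (-(q ^ 2)) * (q ^ 2) ^ (2 * k) := by
        intro k
        rw [pow_mul]
        ring_nf
      have heqo : ∀ k : ℕ, 1 - (-q ^ 4) * (q ^ 4) ^ k
          = 1 - (-(q ^ 2)) * (q ^ 2) ^ (2 * k + 1) := by
        intro k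
        rw [pow_add, pow_mul, pow_one]
        ring_nf
      unfold qPochInf
      rw [← tprod_even_mul_odd (f := fun j => 1 - (-(q ^ 2)) * (q ^ 2) ^ j)
        (hme.congr heqe) (hmo.congr heqo)]
      congr 1
      · exact tprod_congr fun k => (heqe k).symm
      · exact tprod_congr fun k => (heqo k).symm
    rw [hsplit]
    ring
end
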